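/- arXiv:math/0611712 — 6 statements merged into one kernel-verified Lean document; each statement's English description precedes it below -/
import Mathlib

section
/- For n ≥ 3, let σ = σ_1σ_2⋯σ_{n-1} ∈ Br_n. Then Br_n is generated by σ_1 and σ (indeed σ_{i+1} = σ^i σ_1 σ^{-i} for i = 1, …, n-2), and the group presented with two generators a, b and relations a b^i a b^{-i} = b^i a b^{-i} a for all integers i with 2 ≤ i ≤ n/2, together with b^n = (b a)^{n-1}, is isomorphic to Br_n via the homomorphism sending a ↦ σ_1 and b ↦ σ. -/
/-- The braid relations on `m` generators `σ_1, …, σ_m` (0-indexed as `σ 0, …, σ (m-1)`):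
`σ_i σ_j = σ_j σ_i` for `|i - j| > 1` and `σ_i σ_{i+1} σ_i = σ_{i+1} σ_i σ_{i+1}`. -/
def braidRels (m : ℕ) : Set (FreeGroup (Fin m)) :=
  {r | (∃ i j : Fin m, (i : ℕ) + 1 < (j : ℕ) ∧
        r = FreeGroup.of i * FreeGroup.of j * (FreeGroup.of i)⁻¹ * (FreeGroup.of j)⁻¹) ∨
       (∃ i j : Fin m, (i : ℕ) + 1 = (j : ℕ) ∧
        r = FreeGroup.of i * FreeGroup.of j * FreeGroup.of i *
            (FreeGroup.of j * FreeGroup.of i * FreeGroup.of j)⁻¹)}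

/-- The braid group `Br_n` on `n` strands, presented with generators `σ_1, …, σ_{n-1}`
(0-indexed) and the braid relations. -/
abbrev BraidGroup (n : ℕ) : Type := PresentedGroup (braidRels (n - 1))

/-- The standard generator `σ_{i+1}` of `Br_n` (0-indexed: `σ i` is the paper's `σ_{i+1}`). -/
def σ {n : ℕ} (i : Fin (n - 1)) : BraidGroup n := PresentedGroup.of i

/-- The relations of Artin's two-generator presentation of `Br_n`: generators `a` (= `of 0`)
and `b` (= `of 1`), relations `a bⁱ a b⁻ⁱ = bⁱ a b⁻ⁱ a` for integers `2 ≤ i ≤ n/2`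
(equivalently `2 ≤ i` and `2i ≤ n`), and `bⁿ = (ba)ⁿ⁻¹`. -/
def twoGenRels (n : ℕ) : Set (FreeGroup (Fin 2)) :=
  {r | (∃ i : ℕ, 2 ≤ i ∧ 2 * i ≤ n ∧
        r = FreeGroup.of 0 * (FreeGroup.of 1) ^ i * FreeGroup.of 0 * ((FreeGroup.of 1) ^ i)⁻¹ *
            ((FreeGroup.of 1) ^ i * FreeGroup.of 0 * ((FreeGroup.of 1) ^ i)⁻¹ *
              FreeGroup.of 0)⁻¹) ∨
       r = (FreeGroup.of 1) ^ n * ((FreeGroup.of 1 * FreeGroup.of 0) ^ (n - 1))⁻¹}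

/-!
Write `δ = σ_1 ⋯ σ_{n-1}`. The braid relations give `δ σ_i δ⁻¹ = σ_{i+1}`, hence
`σ_{i+1} = δⁱ σ_1 δ⁻ⁱ`: so `σ_1` and `δ` generate, and the relation `a bⁱ a b⁻ⁱ = bⁱ a b⁻ⁱ a`
becomes `σ_1 σ_{i+1} = σ_{i+1} σ_1`. The telescoping identity `∏_{j<k} bʲ a b⁻ʲ = (ab)ᵏ b⁻ᵏ`,
applied to `δ = ∏_j δʲ σ_1 δ⁻ʲ`, gives `δⁿ = (δ σ_1)ⁿ⁻¹`.

Conversely, in the two-generator group `bⁿ = (ba)ⁿ⁻¹` commutes with `ba` and with `b`, hence is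
central. So the relation for `i` is conjugate to the one for `n - i`, and `a` commutes with every
`bⁱ a b⁻ⁱ`, `2 ≤ i ≤ n - 2`. The telescoping identity now gives `b = a t Q` with `t = b a b⁻¹` and
`Q` commuting with `a`, and conjugating `a` by `b` yields `a t a = t a t`. Thus
`σ_{i+1} ↦ bⁱ a b⁻ⁱ` respects the braid relations and is inverse to `a ↦ σ_1`, `b ↦ δ`.
-/

section Generic
variable {G : Type*} [Group G]

lemma PresentedGroup.lift_of_eq_one {α : Type*} {rels : Set (FreeGroup α)} {r : FreeGroup α}
    (hr : r ∈ rels) : FreeGroup.lift (PresentedGroup.of : α → PresentedGroup rels) r = 1 := by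
  rw [show FreeGroup.lift PresentedGroup.of = PresentedGroup.mk rels from
    FreeGroup.ext_hom _ _ fun _ => FreeGroup.lift_apply_of]
  exact PresentedGroup.one_of_mem hr

lemma prod_ofFn_conj_pow (a b : G) (k : ℕ) :
    (List.ofFn fun j : Fin k => b ^ (j : ℕ) * a * (b ^ (j : ℕ))⁻¹).prod
      = (a * b) ^ k * (b ^ k)⁻¹ := by
  induction k with
  | zero => simp
  | succ k ih =>
    rw [List.ofFn_succ_last, List.prod_append]
    simp only [Fin.val_castSucc, Fin.val_last, ih]
    simp [pow_succ, mul_assoc]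

lemma prod_ofFn_eq_take_mul_mul_mul_drop {m : ℕ} (f : Fin m → G) (i : ℕ) (h : i + 2 ≤ m) :
    (List.ofFn f).prod = ((List.ofFn f).take i).prod * f ⟨i, by omega⟩ * f ⟨i + 1, by omega⟩ *
      ((List.ofFn f).drop (i + 2)).prod := by
  conv_lhs => rw [← List.prod_take_mul_prod_drop (List.ofFn f) i,
    List.drop_eq_getElem_cons (by simp; omega), List.drop_eq_getElem_cons (by simp; omega)]
  simp [mul_assoc]

lemma commute_prod_take_ofFn {m : ℕ} (f : Fin m → G) (x : G) (i : ℕ)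
    (h : ∀ k : Fin m, (k : ℕ) < i → Commute x (f k)) : Commute x ((List.ofFn f).take i).prod := by
  refine Commute.list_prod_right _ _ fun z hz => ?_
  obtain ⟨k, hk, rfl⟩ := List.mem_take_iff_getElem.1 hz
  simp only [List.length_ofFn, lt_min_iff] at hk
  simpa using h ⟨k, hk.2⟩ hk.1

lemma commute_prod_drop_ofFn {m : ℕ} (f : Fin m → G) (x : G) (i : ℕ)
    (h : ∀ k : Fin m, i ≤ (k : ℕ) → Commute x (f k)) : Commute x ((List.ofFn f).drop i).prod := by
  refine Commute.list_prod_right _ _ fun z hz => ?_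
  obtain ⟨k, hk, rfl⟩ := List.mem_drop_iff_getElem.1 hz
  simp only [List.length_ofFn] at hk
  simpa using h ⟨i + k, by omega⟩ (by simp)

end Generic

section BraidFamily
variable {G : Type*} [Group G]

def IsBraidFamily {m : ℕ} (s : Fin m → G) : Prop :=
  (∀ i j : Fin m, (i : ℕ) + 1 < j → Commute (s i) (s j)) ∧
    ∀ i j : Fin m, (i : ℕ) + 1 = j → s i * s j * s i = s j * s i * s j

lemma isBraidFamily_iff_lift {m : ℕ} (s : Fin m → G) :
    IsBraidFamily s ↔ ∀ r ∈ braidRels m, FreeGroup.lift s r = 1 := by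
  have hcomm (i j : Fin m) : FreeGroup.lift s
      (FreeGroup.of i * FreeGroup.of j * (FreeGroup.of i)⁻¹ * (FreeGroup.of j)⁻¹) = 1 ↔
      Commute (s i) (s j) := by
    simp only [map_mul, map_inv, FreeGroup.lift_apply_of, mul_inv_eq_iff_eq_mul, one_mul]
    rfl
  have hbraid (i j : Fin m) : FreeGroup.lift s (FreeGroup.of i * FreeGroup.of j * FreeGroup.of i *
      (FreeGroup.of j * FreeGroup.of i * FreeGroup.of j)⁻¹) = 1 ↔
      s i * s j * s i = s j * s i * s j := by
    simp only [map_mul, map_inv, FreeGroup.lift_apply_of, mul_inv_eq_one]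
  constructor
  · rintro ⟨hc, hb⟩ r (⟨i, j, hij, rfl⟩ | ⟨i, j, hij, rfl⟩)
    · exact (hcomm i j).2 (hc i j hij)
    · exact (hbraid i j).2 (hb i j hij)
  · intro h
    exact ⟨fun i j hij => (hcomm i j).1 (h _ (Or.inl ⟨i, j, hij, rfl⟩)),
      fun i j hij => (hbraid i j).1 (h _ (Or.inr ⟨i, j, hij, rfl⟩))⟩

lemma isBraidFamily_σ (n : ℕ) : IsBraidFamily (σ : Fin (n - 1) → BraidGroup n) :=
  (isBraidFamily_iff_lift _).2 fun _ => PresentedGroup.lift_of_eq_one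

namespace IsBraidFamily
variable {m : ℕ} {s : Fin m → G}

lemma prod_mul_eq_mul_prod (hs : IsBraidFamily s) (i : ℕ) (h : i + 2 ≤ m) :
    (List.ofFn s).prod * s ⟨i, by omega⟩ = s ⟨i + 1, by omega⟩ * (List.ofFn s).prod := by
  have hT := commute_prod_take_ofFn s (s ⟨i + 1, by omega⟩) i
    fun k hk => (hs.1 k _ (by simp; omega)).symm
  have hD := commute_prod_drop_ofFn s (s ⟨i, by omega⟩) (i + 2)
    fun k hk => hs.1 _ k (by simp; omega)
  have hB := hs.2 ⟨i, by omega⟩ ⟨i + 1, by omega⟩ rfl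
  rw [prod_ofFn_eq_take_mul_mul_mul_drop s i h]
  simp only [mul_assoc]
  rw [← hD.eq, ← mul_assoc (s _) (s _), ← mul_assoc (_ * _) (s _), hB]
  simp only [← mul_assoc]
  rw [← hT.eq]

lemma eq_conj_prod_pow (hs : IsBraidFamily s) (i : ℕ) (h : i < m) :
    s ⟨i, h⟩ = (List.ofFn s).prod ^ i * s ⟨0, by omega⟩ * ((List.ofFn s).prod ^ i)⁻¹ := by
  induction i with
  | zero => simp
  | succ i ih =>
    set δ := (List.ofFn s).prod
    calc s ⟨i + 1, h⟩ = δ * s ⟨i, by omega⟩ * δ⁻¹ := by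
          rw [hs.prod_mul_eq_mul_prod i h, mul_inv_cancel_right]
      _ = δ * (δ ^ i * s ⟨0, by omega⟩ * (δ ^ i)⁻¹) * δ⁻¹ := by rw [← ih]
      _ = δ ^ (i + 1) * s ⟨0, by omega⟩ * (δ ^ (i + 1))⁻¹ := by group

lemma prod_pow_succ (hs : IsBraidFamily s) (hm : 0 < m) :
    (List.ofFn s).prod ^ (m + 1) = ((List.ofFn s).prod * s ⟨0, hm⟩) ^ m := by
  set δ := (List.ofFn s).prod
  have hδ : δ = (s ⟨0, hm⟩ * δ) ^ m * (δ ^ m)⁻¹ := by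
    rw [← prod_ofFn_conj_pow]
    exact congrArg List.prod (List.ofFn_inj.2 (funext fun i => hs.eq_conj_prod_pow i i.2))
  have hpow : δ ^ (m + 1) = (s ⟨0, hm⟩ * δ) ^ m := by
    rw [pow_succ']
    exact eq_mul_inv_iff_mul_eq.1 hδ
  calc δ ^ (m + 1) = δ * δ ^ (m + 1) * δ⁻¹ := by
        rw [(Commute.self_pow δ (m + 1)).eq, mul_inv_cancel_right]
    _ = δ * (s ⟨0, hm⟩ * δ) ^ m * δ⁻¹ := by rw [hpow]
    _ = (δ * s ⟨0, hm⟩) ^ m := by rw [← conj_pow, ← mul_assoc, mul_inv_cancel_right]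

lemma range_subset_closure (hs : IsBraidFamily s) (hm : 0 < m) :
    Set.range s ⊆ Subgroup.closure {s ⟨0, hm⟩, (List.ofFn s).prod} := by
  rintro _ ⟨⟨i, hi⟩, rfl⟩
  have h0 : s ⟨0, hm⟩ ∈ Subgroup.closure {s ⟨0, hm⟩, (List.ofFn s).prod} :=
    Subgroup.subset_closure (Set.mem_insert _ _)
  have hδ : (List.ofFn s).prod ∈ Subgroup.closure {s ⟨0, hm⟩, (List.ofFn s).prod} :=
    Subgroup.subset_closure (Set.mem_insert_of_mem _ rfl)
  rw [hs.eq_conj_prod_pow i hi]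
  exact mul_mem (mul_mem (pow_mem hδ i) h0) (inv_mem (pow_mem hδ i))

end IsBraidFamily
end BraidFamily

section TwoGenPair
variable {G : Type*} [Group G]

def IsTwoGenPair (n : ℕ) (a b : G) : Prop :=
  (∀ i : ℕ, 2 ≤ i → 2 * i ≤ n → Commute a (b ^ i * a * (b ^ i)⁻¹)) ∧ b ^ n = (b * a) ^ (n - 1)

lemma isTwoGenPair_iff_lift (n : ℕ) (a b : G) :
    IsTwoGenPair n a b ↔ ∀ r ∈ twoGenRels n, FreeGroup.lift ![a, b] r = 1 := by
  have hcomm (i : ℕ) : FreeGroup.lift ![a, b]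
      (FreeGroup.of 0 * (FreeGroup.of 1) ^ i * FreeGroup.of 0 * ((FreeGroup.of 1) ^ i)⁻¹ *
        ((FreeGroup.of 1) ^ i * FreeGroup.of 0 * ((FreeGroup.of 1) ^ i)⁻¹ * FreeGroup.of 0)⁻¹)
      = 1 ↔ Commute a (b ^ i * a * (b ^ i)⁻¹) := by
    simp only [map_mul, map_inv, map_pow, FreeGroup.lift_apply_of, Matrix.cons_val_zero,
      Matrix.cons_val_one, mul_inv_eq_one]
    simp only [commute_iff_eq, mul_assoc]
  have hpow : FreeGroup.lift ![a, b]
      ((FreeGroup.of 1) ^ n * ((FreeGroup.of 1 * FreeGroup.of 0) ^ (n - 1))⁻¹) = 1 ↔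
      b ^ n = (b * a) ^ (n - 1) := by
    simp only [map_mul, map_inv, map_pow, FreeGroup.lift_apply_of, Matrix.cons_val_zero,
      Matrix.cons_val_one, mul_inv_eq_one]
  constructor
  · rintro ⟨hc, hp⟩ r (⟨i, hi, hin, rfl⟩ | rfl)
    · exact (hcomm i).2 (hc i hi hin)
    · exact hpow.2 hp
  · intro h
    exact ⟨fun i hi hin => (hcomm i).1 (h _ (Or.inl ⟨i, hi, hin, rfl⟩)), hpow.1 (h _ (Or.inr rfl))⟩

lemma isTwoGenPair_of (n : ℕ) :
    IsTwoGenPair n (PresentedGroup.of 0 : PresentedGroup (twoGenRels n)) (PresentedGroup.of 1) := by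
  have hof : ![PresentedGroup.of 0, PresentedGroup.of 1] =
      (PresentedGroup.of : Fin 2 → PresentedGroup (twoGenRels n)) := by
    funext i
    fin_cases i <;> rfl
  rw [isTwoGenPair_iff_lift, hof]
  exact fun _ => PresentedGroup.lift_of_eq_one

namespace IsTwoGenPair
variable {n : ℕ} {a b : G}

lemma commute_pow (h : IsTwoGenPair n a b) : Commute a (b ^ n) := by
  have hba : Commute (b * a) (b ^ n) := h.2 ▸ Commute.self_pow _ _
  simpa using (Commute.self_pow b n).inv_left.mul_left hba

lemma commute_conj_pow (h : IsTwoGenPair n a b) (k : ℕ) (hk : 2 ≤ k) (hkn : k + 2 ≤ n) :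
    Commute a (b ^ k * a * (b ^ k)⁻¹) := by
  rcases le_total (2 * k) n with hk' | hk'
  · exact h.1 k hk hk'
  · obtain ⟨l, rfl⟩ : ∃ l, n = k + l := ⟨n - k, by omega⟩
    have hconj : b ^ k * a * (b ^ k)⁻¹ = (b ^ l)⁻¹ * a * ((b ^ l)⁻¹)⁻¹ :=
      calc b ^ k * a * (b ^ k)⁻¹ = (b ^ l)⁻¹ * (b ^ (k + l) * a * (b ^ (k + l))⁻¹) * b ^ l := by
            group
        _ = (b ^ l)⁻¹ * a * ((b ^ l)⁻¹)⁻¹ := by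
            rw [← h.commute_pow.eq, mul_inv_cancel_right, inv_inv]
    have hl := (Commute.conj_iff (b ^ l)⁻¹).2 (h.1 l (by omega) (by omega))
    rw [show (b ^ l)⁻¹ * (b ^ l * a * (b ^ l)⁻¹) * ((b ^ l)⁻¹)⁻¹ = a by group] at hl
    rw [hconj]
    exact hl.symm

lemma mul_pow_eq_pow (h : IsTwoGenPair n a b) : (a * b) ^ (n - 1) = b ^ n := by
  have hsemi : a * (b * a) ^ (n - 1) = (a * b) ^ (n - 1) * a :=
    (SemiconjBy.pow_right (by simp only [SemiconjBy, mul_assoc]) (n - 1)).eq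
  rw [← h.2, h.commute_pow.eq] at hsemi
  exact (mul_right_cancel hsemi).symm

lemma prod_conj_pow (h : IsTwoGenPair n a b) (hn : 0 < n) :
    (List.ofFn fun j : Fin (n - 1) => b ^ (j : ℕ) * a * (b ^ (j : ℕ))⁻¹).prod = b := by
  rw [prod_ofFn_conj_pow, h.mul_pow_eq_pow, ← Nat.sub_add_cancel hn, pow_succ', Nat.add_sub_cancel,
    mul_inv_cancel_right]

lemma braid (h : IsTwoGenPair n a b) (hn : 3 ≤ n) :
    a * (b * a * b⁻¹) * a = b * a * b⁻¹ * a * (b * a * b⁻¹) := by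
  set t := b * a * b⁻¹ with ht
  set f := fun j : Fin (n - 1) => b ^ (j : ℕ) * a * (b ^ (j : ℕ))⁻¹
  set Q := ((List.ofFn f).drop 2).prod
  have hQ : Q * a * Q⁻¹ = a := by
    rw [← (commute_prod_drop_ofFn f a 2 fun k hk => h.commute_conj_pow k hk (by omega)).eq,
      mul_inv_cancel_right]
  have hb : b = a * t * Q := by
    conv_lhs => rw [← h.prod_conj_pow (by omega), prod_ofFn_eq_take_mul_mul_mul_drop f 0 (by omega)]
    rw [List.take_zero, List.prod_nil, one_mul]
    congr 2 <;> simp [f, ht]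
  have ht' : t = a * t * a * t⁻¹ * a⁻¹ :=
    calc t = (a * t * Q) * a * (a * t * Q)⁻¹ := by rw [← hb]
      _ = a * t * (Q * a * Q⁻¹) * t⁻¹ * a⁻¹ := by group
      _ = a * t * a * t⁻¹ * a⁻¹ := by rw [hQ]
  calc a * t * a = (a * t * a * t⁻¹ * a⁻¹) * a * t := by group
    _ = t * a * t := by rw [← ht']

lemma isBraidFamily_conj (h : IsTwoGenPair n a b) (hn : 3 ≤ n) :
    IsBraidFamily fun i : Fin (n - 1) => b ^ (i : ℕ) * a * (b ^ (i : ℕ))⁻¹ := by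
  have hconj (i k : ℕ) :
      b ^ (i + k) * a * (b ^ (i + k))⁻¹ = MulAut.conj (b ^ i) (b ^ k * a * (b ^ k)⁻¹) := by
    rw [MulAut.conj_apply]
    group
  have hconj₀ (i : ℕ) : b ^ i * a * (b ^ i)⁻¹ = MulAut.conj (b ^ i) a := rfl
  refine ⟨fun i j hij => ?_, fun i j hij => ?_⟩
  · obtain ⟨k, hk⟩ : ∃ k, (j : ℕ) = i + k := ⟨j - i, by omega⟩
    simp only [hk, hconj, hconj₀ (i : ℕ)]
    exact (h.commute_conj_pow k (by omega) (by omega)).map _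
  · simp only [← hij, hconj _ 1, hconj₀ (i : ℕ), pow_one, ← map_mul, h.braid hn]

end IsTwoGenPair

lemma IsBraidFamily.isTwoGenPair {n : ℕ} {s : Fin (n - 1) → G} (hs : IsBraidFamily s)
    (hn : 2 ≤ n) : IsTwoGenPair n (s ⟨0, by omega⟩) (List.ofFn s).prod := by
  refine ⟨fun i hi hin => ?_, ?_⟩
  · rw [← hs.eq_conj_prod_pow i (by omega)]
    exact hs.1 _ _ (by simp; omega)
  · have := hs.prod_pow_succ (by omega)
    rwa [Nat.sub_add_cancel (by omega)] at this

end TwoGenPair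

section TwoGenEquiv
variable {n : ℕ}

def twoGenToBraid (n : ℕ) (hn : 2 ≤ n) : PresentedGroup (twoGenRels n) →* BraidGroup n :=
  PresentedGroup.toGroup <|
    (isTwoGenPair_iff_lift n _ _).1 ((isBraidFamily_σ n).isTwoGenPair hn)

lemma twoGenToBraid_of_zero (hn : 2 ≤ n) :
    twoGenToBraid n hn (PresentedGroup.of 0) = σ ⟨0, by omega⟩ :=
  PresentedGroup.toGroup.of _

lemma twoGenToBraid_of_one (hn : 2 ≤ n) :
    twoGenToBraid n hn (PresentedGroup.of 1) = (List.ofFn σ).prod :=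
  PresentedGroup.toGroup.of _

def braidToTwoGen (n : ℕ) (hn : 3 ≤ n) : BraidGroup n →* PresentedGroup (twoGenRels n) :=
  PresentedGroup.toGroup <| (isBraidFamily_iff_lift _).1 ((isTwoGenPair_of n).isBraidFamily_conj hn)

lemma braidToTwoGen_comp_twoGenToBraid (hn : 3 ≤ n) :
    (braidToTwoGen n hn).comp (twoGenToBraid n (by omega)) = MonoidHom.id _ := by
  refine PresentedGroup.ext fun x => ?_
  rw [MonoidHom.comp_apply, MonoidHom.id_apply, twoGenToBraid, PresentedGroup.toGroup.of]
  fin_cases x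
  · simp [braidToTwoGen, σ, PresentedGroup.toGroup.of]
  · simp only [Fin.mk_one, Matrix.cons_val_one, Matrix.cons_val_fin_one]
    have hσ : ⇑(braidToTwoGen n hn) ∘ σ = fun j : Fin (n - 1) =>
        PresentedGroup.of 1 ^ (j : ℕ) * PresentedGroup.of 0 * (PresentedGroup.of 1 ^ (j : ℕ))⁻¹ :=
      funext fun _ => PresentedGroup.toGroup.of _
    rw [map_list_prod, List.map_ofFn, hσ]
    exact (isTwoGenPair_of n).prod_conj_pow (by omega)

lemma twoGenToBraid_comp_braidToTwoGen (hn : 3 ≤ n) :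
    (twoGenToBraid n (by omega)).comp (braidToTwoGen n hn) = MonoidHom.id _ := by
  refine PresentedGroup.ext fun i => ?_
  rw [MonoidHom.comp_apply, MonoidHom.id_apply, braidToTwoGen, PresentedGroup.toGroup.of]
  simp only [twoGenToBraid, map_mul, map_pow, map_inv, PresentedGroup.toGroup.of,
    Matrix.cons_val_zero, Matrix.cons_val_one]
  exact ((isBraidFamily_σ n).eq_conj_prod_pow i i.2).symm

def twoGenEquivBraid (n : ℕ) (hn : 3 ≤ n) : PresentedGroup (twoGenRels n) ≃* BraidGroup n :=
  MonoidHom.toMulEquiv _ _ (braidToTwoGen_comp_twoGenToBraid hn)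
    (twoGenToBraid_comp_braidToTwoGen hn)

end TwoGenEquiv

/-- For `n ≥ 3`, let `σ = σ_1 σ_2 ⋯ σ_{n-1} ∈ Br_n`.  Then `σ_{i+1} = σ^i σ_1 σ^{-i}` for
`i = 1, …, n-2`, the group `Br_n` is generated by `σ_1` and `σ`, and the group presented by
two generators `a, b` subject to `a bⁱ a b⁻ⁱ = bⁱ a b⁻ⁱ a` (for `2 ≤ i ≤ n/2`) and
`bⁿ = (ba)ⁿ⁻¹` is isomorphic to `Br_n` via `a ↦ σ_1`, `b ↦ σ`. -/
theorem braid_two_generator_presentation (n : ℕ) (hn : 3 ≤ n) :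
    (∀ i : ℕ, ∀ _h1 : 1 ≤ i, ∀ _h2 : i ≤ n - 2,
      σ (⟨i, by omega⟩ : Fin (n - 1)) =
        (List.ofFn (fun k : Fin (n - 1) => σ k)).prod ^ i * σ (⟨0, by omega⟩ : Fin (n - 1)) *
          ((List.ofFn (fun k : Fin (n - 1) => σ k)).prod ^ i)⁻¹) ∧
    Subgroup.closure {σ (⟨0, by omega⟩ : Fin (n - 1)),
        (List.ofFn (fun k : Fin (n - 1) => σ k)).prod} = (⊤ : Subgroup (BraidGroup n)) ∧
    ∃ φ : PresentedGroup (twoGenRels n) ≃* BraidGroup n,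
      φ (PresentedGroup.of 0) = σ (⟨0, by omega⟩ : Fin (n - 1)) ∧
      φ (PresentedGroup.of 1) = (List.ofFn (fun k : Fin (n - 1) => σ k)).prod := by
  refine ⟨fun i _ _ => (isBraidFamily_σ n).eq_conj_prod_pow i (by omega), ?_,
    twoGenEquivBraid n hn, twoGenToBraid_of_zero (n := n) (by omega),
    twoGenToBraid_of_one (n := n) (by omega)⟩
  rw [eq_top_iff, ← PresentedGroup.closure_range_of, Subgroup.closure_le]
  exact (isBraidFamily_σ n).range_subset_closure (by omega)
end

section
/- The group presented with generators a_{ts} for 1 ≤ s < t ≤ n and relations a_{ts}a_{rq} = a_{rq}a_{ts} whenever (t-r)(t-q)(s-r)(s-q) > 0, and a_{ts}a_{sr} = a_{tr}a_{ts} = a_{sr}a_{tr} for 1 ≤ r < s < t ≤ n, is isomorphic to the braid group Br_n via the homomorphism sending a_{ts} to the element (σ_{t-1}σ_{t-2}⋯σ_{s+1}) σ_s (σ_{s+1}^{-1}⋯σ_{t-2}^{-1}σ_{t-1}^{-1}) of Br_n. -/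
/-- The generator `σ_{i+1}` of `Br_n` for a natural-number index `i` (0-indexed), extended
by `1` outside the legal range. -/
def σ' {n : ℕ} (i : ℕ) : BraidGroup n := if h : i < n - 1 then σ ⟨i, h⟩ else 1

/-- The word `σ_{t-1} σ_{t-2} ⋯ σ_{s+1}` in `Br_n` (0-indexed generators). -/
def descProd {n : ℕ} (s t : ℕ) : BraidGroup n :=
  ((List.range (t - 1 - s)).map fun k => σ' (n := n) (t - 1 - k)).prod

/-- The band generator `a_{ts} = (σ_{t-1} σ_{t-2} ⋯ σ_{s+1}) σ_s (σ_{s+1}⁻¹ ⋯ σ_{t-1}⁻¹)`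
of `Br_n`, for `s < t` (0-indexed strands `0, …, n-1`). -/
def band {n : ℕ} (t s : ℕ) : BraidGroup n :=
  descProd s t * σ' s * (descProd s t)⁻¹

/-- The index set for the Birman–Ko–Lee generators `a_{ts}`, `0 ≤ s < t ≤ n-1` (0-indexed). -/
def BKLGen (n : ℕ) : Type := {p : Fin n × Fin n // p.2 < p.1}

/-- The Birman–Ko–Lee relations: `a_{ts} a_{rq} = a_{rq} a_{ts}` whenever
`(t-r)(t-q)(s-r)(s-q) > 0`, and `a_{ts} a_{sr} = a_{tr} a_{ts} = a_{sr} a_{tr}` for `r < s < t`. -/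
def bklRels (n : ℕ) : Set (FreeGroup (BKLGen n)) :=
  {w | (∃ a b : BKLGen n,
          ((a.1.1 : ℤ) - (b.1.1 : ℤ)) * ((a.1.1 : ℤ) - (b.1.2 : ℤ)) *
            ((a.1.2 : ℤ) - (b.1.1 : ℤ)) * ((a.1.2 : ℤ) - (b.1.2 : ℤ)) > 0 ∧
          w = FreeGroup.of a * FreeGroup.of b * (FreeGroup.of b * FreeGroup.of a)⁻¹) ∨
       (∃ t s r : Fin n, ∃ h1 : s < t, ∃ h2 : r < s,
          w = FreeGroup.of (⟨(t, s), h1⟩ : BKLGen n) * FreeGroup.of (⟨(s, r), h2⟩ : BKLGen n) *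
              (FreeGroup.of (⟨(t, r), h2.trans h1⟩ : BKLGen n) *
                FreeGroup.of (⟨(t, s), h1⟩ : BKLGen n))⁻¹) ∨
       (∃ t s r : Fin n, ∃ h1 : s < t, ∃ h2 : r < s,
          w = FreeGroup.of (⟨(t, r), h2.trans h1⟩ : BKLGen n) *
              FreeGroup.of (⟨(t, s), h1⟩ : BKLGen n) *
              (FreeGroup.of (⟨(s, r), h2⟩ : BKLGen n) *
                FreeGroup.of (⟨(t, r), h2.trans h1⟩ : BKLGen n))⁻¹)}

/-! In `Br_n` the band generator `a_{ts}` is `σ_s` conjugated by `σ_{t-1} ⋯ σ_{s+1}`, so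
`a_{t+1,s} = σ_t a_{ts} σ_t⁻¹`. Since `σ_t` commutes with every `a_{sr}` with `s < t`, each
Birman–Ko–Lee relation follows by induction on the largest index from the case `t = s + 1`,
and there it reduces to the braid relations, through the fact that `σ_s σ_{s+1}` conjugates
`σ_s` to `σ_{s+1}`. Conversely `σ_i ↦ a_{i+1,i}` respects the braid relations because
`a_{i+2,i+1} a_{i+1,i} = a_{i+2,i} a_{i+2,i+1} = a_{i+1,i} a_{i+2,i}`, and the relation
`a_{t+1,t} a_{ts} a_{t+1,t}⁻¹ = a_{t+1,s}` shows that the two maps are mutually inverse. -/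

section Group

variable {G : Type*} [Group G] {a b c g : G}

theorem Commute.mul_mul_inv_right (hg : Commute a g) (hb : Commute a b) :
    Commute a (g * b * g⁻¹) :=
  (hg.mul_right hb).mul_right hg.inv_right

theorem conj_eq_of_braid (h : a * b * a = b * a * b) : a * b * a * (a * b)⁻¹ = b := by
  rw [h]; group

theorem braid_conj (h : a * b * a = b * a * b) (g : G) :
    g * a * g⁻¹ * (g * b * g⁻¹) * (g * a * g⁻¹) =
      g * b * g⁻¹ * (g * a * g⁻¹) * (g * b * g⁻¹) := by
  simp only [← MulAut.conj_apply, ← map_mul, h]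

theorem braid_of_mul_eq_mul_of_mul_eq_mul (h₁ : a * b = c * a) (h₂ : c * a = b * c) :
    b * a * b = a * b * a := by
  calc b * a * b = b * c * a := by rw [mul_assoc, h₁, mul_assoc]
    _ = a * b * a := by rw [← h₂, ← h₁]

end Group

theorem PresentedGroup.of_mul_of_eq_of_mul_of {α : Type*} {rels : Set (FreeGroup α)}
    {a b c d : α}
    (h : FreeGroup.of a * FreeGroup.of b * (FreeGroup.of c * FreeGroup.of d)⁻¹ ∈ rels) :
    (PresentedGroup.of a * PresentedGroup.of b : PresentedGroup rels) =
      PresentedGroup.of c * PresentedGroup.of d :=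
  (map_mul _ _ _).symm.trans ((PresentedGroup.mk_eq_mk_of_mul_inv_mem h).trans (map_mul _ _ _))

theorem disjoint_or_nested_of_mul_pos {q r s t : ℤ} (hst : s < t) (hqr : q < r)
    (h : 0 < (t - r) * (t - q) * (s - r) * (s - q)) :
    r < s ∨ t < q ∨ s < q ∧ r < t ∨ q < s ∧ t < r := by
  rw [mul_assoc _ (s - r)] at h
  simp only [mul_pos_iff, mul_neg_iff, sub_pos, sub_neg] at h
  omega

section

variable {n : ℕ}

theorem σ'_coe (i : Fin (n - 1)) : (σ' i : BraidGroup n) = σ i :=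
  dif_pos i.isLt

theorem commute_σ' {j k : ℕ} (h : j + 2 ≤ k) : Commute (σ' j : BraidGroup n) (σ' k) := by
  unfold σ' σ
  split_ifs with hj hk
  · have := PresentedGroup.one_of_mem (rels := braidRels (n - 1))
      (Or.inl ⟨⟨j, hj⟩, ⟨k, hk⟩, by simp only; omega, rfl⟩)
    beta_reduce at this
    simp only [map_mul, map_inv] at this
    exact commutatorElement_eq_one_iff_commute.1 this
  all_goals simp

theorem σ'_braid {k : ℕ} (h : k + 2 < n) :
    (σ' k * σ' (k + 1) * σ' k : BraidGroup n) = σ' (k + 1) * σ' k * σ' (k + 1) := by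
  unfold σ' σ
  rw [dif_pos (by omega), dif_pos (by omega)]
  have := PresentedGroup.mk_eq_mk_of_mul_inv_mem (rels := braidRels (n - 1))
    (Or.inr ⟨⟨k, by omega⟩, ⟨k + 1, by omega⟩, rfl, rfl⟩)
  beta_reduce at this
  simp only [map_mul] at this
  exact this

@[simp]
theorem band_succ_self (s : ℕ) : (band (s + 1) s : BraidGroup n) = σ' s := by
  simp [band, descProd]

theorem band_succ {s t : ℕ} (h : s < t) :
    (band (t + 1) s : BraidGroup n) = σ' t * band t s * (σ' t)⁻¹ := by
  have : (descProd s (t + 1) : BraidGroup n) = σ' t * descProd s t := by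
    rw [descProd, show t + 1 - 1 - s = t - 1 - s + 1 by omega, List.range_succ_eq_map]
    simp only [List.map_cons, List.prod_cons, List.map_map, descProd]
    congr 3
    funext k
    simp only [Function.comp_apply]
    congr 1
    omega
  simp only [band, this]
  group

theorem commute_σ'_band_of_disjoint {k s t : ℕ} (hst : s < t) (hk : k + 2 ≤ s ∨ t < k) :
    Commute (σ' k : BraidGroup n) (band t s) := by
  induction t, hst using Nat.le_induction with
  | base =>
    rw [band_succ_self]
    rcases hk with hk | hk
    · exact commute_σ' hk
    · exact (commute_σ' (by omega)).symm
  | succ t hst ih =>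
    rw [band_succ hst]
    rcases hk with hk | hk
    · exact (commute_σ' (by omega)).mul_mul_inv_right (ih (.inl hk))
    · exact (commute_σ' (by omega)).symm.mul_mul_inv_right (ih (.inr (by omega)))

theorem commute_σ'_band_of_lt_of_add_two_le {k s t : ℕ} (hsk : s < k) (hkt : k + 2 ≤ t)
    (ht : t < n) : Commute (σ' k : BraidGroup n) (band t s) := by
  induction t, hkt using Nat.le_induction with
  | base =>
    have hconj := (commute_σ'_band_of_disjoint hsk (.inr (lt_add_one k))).conj
      (σ' (k + 1) * σ' k : BraidGroup n)
    rw [conj_eq_of_braid (σ'_braid ht).symm] at hconj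
    rw [band_succ (by omega), band_succ hsk]
    convert hconj using 1
    group
  | succ t hkt ih =>
    rw [band_succ (by omega)]
    exact (commute_σ' hkt).mul_mul_inv_right (ih (by omega))

theorem commute_σ'_band {k s t : ℕ} (hst : s < t) (ht : t < n)
    (hk : k + 2 ≤ s ∨ t < k ∨ s < k ∧ k + 2 ≤ t) :
    Commute (σ' k : BraidGroup n) (band t s) := by
  rcases hk with hk | hk | ⟨hsk, hkt⟩
  · exact commute_σ'_band_of_disjoint hst (.inl hk)
  · exact commute_σ'_band_of_disjoint hst (.inr hk)
  · exact commute_σ'_band_of_lt_of_add_two_le hsk hkt ht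

theorem commute_band_band {q r s t : ℕ} (hqr : q < r) (hst : s < t) (ht : t < n)
    (h : r < s ∨ t < q ∨ s < q ∧ r < t) : Commute (band r q : BraidGroup n) (band t s) := by
  induction r, hqr using Nat.le_induction with
  | base =>
    rw [band_succ_self]
    exact commute_σ'_band hst ht (by omega)
  | succ r hqr ih =>
    rw [band_succ hqr]
    exact ((commute_σ'_band hst ht (by omega)).symm.mul_mul_inv_right
      (ih (by omega)).symm).symm

theorem band_braid {r s : ℕ} (hrs : r < s) (hs : s + 1 < n) :
    (σ' s * band s r * σ' s : BraidGroup n) = band s r * σ' s * band s r := by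
  induction s, hrs using Nat.le_induction with
  | base => simpa using (σ'_braid hs).symm
  | succ s hrs ih =>
    have hσ :
        (σ' s * σ' (s + 1)) * σ' s * (σ' s * σ' (s + 1))⁻¹ = (σ' (s + 1) : BraidGroup n) :=
      conj_eq_of_braid (σ'_braid hs)
    have hband : (σ' s * σ' (s + 1)) * band s r * (σ' s * σ' (s + 1))⁻¹ =
        (band (s + 1) r : BraidGroup n) := by
      calc _ = σ' s * (σ' (s + 1) * band s r * (σ' (s + 1))⁻¹) * (σ' s)⁻¹ := by group
        _ = _ := by
          rw [(commute_σ'_band_of_disjoint hrs (.inr (lt_add_one s))).mul_inv_cancel,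
            band_succ hrs]
    have := braid_conj (ih (by omega)) (σ' s * σ' (s + 1))
    rwa [hσ, hband] at this

theorem band_mul_band {r s t : ℕ} (hrs : r < s) (hst : s < t) :
    (band t s * band s r : BraidGroup n) = band t r * band t s := by
  induction t, hst using Nat.le_induction with
  | base =>
    rw [band_succ_self, band_succ hrs]
    group
  | succ t hst ih =>
    have := congrArg (MulAut.conj (σ' t)) ih
    simp only [map_mul, MulAut.conj_apply,
      (commute_σ'_band_of_disjoint hrs (.inr hst)).mul_inv_cancel] at this
    rwa [band_succ hst, band_succ (hrs.trans hst)]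

theorem band_mul_band' {r s t : ℕ} (hrs : r < s) (hst : s < t) (ht : t < n) :
    (band t r * band t s : BraidGroup n) = band s r * band t r := by
  induction t, hst using Nat.le_induction with
  | base =>
    rw [band_succ_self, band_succ hrs]
    calc σ' s * band s r * (σ' s)⁻¹ * σ' s
        = σ' s * band s r * σ' s * (σ' s)⁻¹ := by group
      _ = band s r * σ' s * band s r * (σ' s)⁻¹ := by rw [band_braid hrs ht]
      _ = band s r * (σ' s * band s r * (σ' s)⁻¹) := by group
  | succ t hst ih =>
    have := congrArg (MulAut.conj (σ' t)) (ih (by omega))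
    simp only [map_mul, MulAut.conj_apply,
      (commute_σ'_band_of_disjoint hrs (.inr hst)).mul_inv_cancel] at this
    rwa [band_succ hst, band_succ (hrs.trans hst)]

theorem commute_band_of_mul_pos {q r s t : ℕ} (hst : s < t) (hqr : q < r) (ht : t < n)
    (hr : r < n) (hpos : 0 < ((t : ℤ) - r) * (t - q) * (s - r) * (s - q)) :
    Commute (band t s : BraidGroup n) (band r q) := by
  rcases disjoint_or_nested_of_mul_pos (Int.ofNat_lt.2 hst) (Int.ofNat_lt.2 hqr) hpos with
    h | h | h | h
  · exact (commute_band_band hqr hst ht (.inl (by omega))).symm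
  · exact (commute_band_band hqr hst ht (.inr (.inl (by omega)))).symm
  · exact (commute_band_band hqr hst ht (.inr (.inr (by omega)))).symm
  · exact commute_band_band hst hqr hr (.inr (.inr (by omega)))

-- The domain is `BKLGen n` unfolded: `bklRels` applies `FreeGroup.of` at this subtype.
def bandOfBKLGen (a : {p : Fin n × Fin n // p.2 < p.1}) : BraidGroup n := band a.1.1 a.1.2

theorem lift_bandOfBKLGen_eq_one : ∀ w ∈ bklRels n, FreeGroup.lift bandOfBKLGen w = 1 := by
  rintro w (⟨a, b, hpos, rfl⟩ | ⟨t, s, r, hst, hrs, rfl⟩ | ⟨t, s, r, hst, hrs, rfl⟩)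
  on_goal 1 => unfold BKLGen at *
  all_goals simp only [map_mul, map_inv, FreeGroup.lift_apply_of, mul_inv_eq_one]
  · exact (commute_band_of_mul_pos a.2 b.2 a.1.1.isLt b.1.1.isLt hpos).eq
  · exact band_mul_band hrs hst
  · exact band_mul_band' hrs hst t.isLt

def bandHom : PresentedGroup (bklRels n) →* BraidGroup n :=
  PresentedGroup.toGroup lift_bandOfBKLGen_eq_one

theorem bandHom_of {s t : Fin n} (h : s < t) :
    bandHom (PresentedGroup.of (α := BKLGen n) ⟨(t, s), h⟩) = band t s :=
  PresentedGroup.toGroup.of _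

def bklGen (t s : ℕ) : PresentedGroup (bklRels n) :=
  if h : s < t ∧ t < n then .of (α := BKLGen n) ⟨(⟨t, h.2⟩, ⟨s, h.1.trans h.2⟩), h.1⟩
  else 1

theorem bklGen_eq {s t : ℕ} (hst : s < t) (ht : t < n) :
    bklGen t s =
      PresentedGroup.of (α := BKLGen n) ⟨(⟨t, ht⟩, ⟨s, hst.trans ht⟩), hst⟩ :=
  dif_pos ⟨hst, ht⟩

theorem bklGen_mul_bklGen {r s t : ℕ} (hrs : r < s) (hst : s < t) (ht : t < n) :
    (bklGen t s * bklGen s r : PresentedGroup (bklRels n)) = bklGen t r * bklGen t s := by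
  rw [bklGen_eq hst ht, bklGen_eq hrs (hst.trans ht), bklGen_eq (hrs.trans hst) ht]
  exact PresentedGroup.of_mul_of_eq_of_mul_of (.inr (.inl ⟨_, _, _, hst, hrs, rfl⟩))

theorem bklGen_mul_bklGen' {r s t : ℕ} (hrs : r < s) (hst : s < t) (ht : t < n) :
    (bklGen t r * bklGen t s : PresentedGroup (bklRels n)) = bklGen s r * bklGen t r := by
  rw [bklGen_eq hst ht, bklGen_eq hrs (hst.trans ht), bklGen_eq (hrs.trans hst) ht]
  exact PresentedGroup.of_mul_of_eq_of_mul_of (.inr (.inr ⟨_, _, _, hst, hrs, rfl⟩))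

theorem commute_bklGen_succ {i j : ℕ} (hij : i + 1 < j) (hj : j + 1 < n) :
    Commute (bklGen (i + 1) i : PresentedGroup (bklRels n)) (bklGen (j + 1) j) := by
  rw [bklGen_eq (lt_add_one i) (by omega), bklGen_eq (lt_add_one j) hj]
  refine PresentedGroup.of_mul_of_eq_of_mul_of (.inl ⟨_, _, ?_, rfl⟩)
  exact mul_pos_of_neg_of_neg (mul_neg_of_pos_of_neg (mul_pos_of_neg_of_neg
    (by simp only; omega) (by simp only; omega)) (by simp only; omega)) (by simp only; omega)

theorem lift_bklGen_eq_one : ∀ w ∈ braidRels (n - 1),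
    FreeGroup.lift (fun i : Fin (n - 1) => (bklGen (i + 1) i : PresentedGroup (bklRels n))) w =
      1 := by
  rintro w (⟨i, j, hij, rfl⟩ | ⟨i, ⟨j, hj⟩, hij, rfl⟩) <;>
    simp only [map_mul, map_inv, FreeGroup.lift_apply_of]
  · exact commutatorElement_eq_one_iff_commute.2 (commute_bklGen_succ hij (by omega))
  · simp only at hij
    subst hij
    rw [mul_inv_eq_one]
    exact braid_of_mul_eq_mul_of_mul_eq_mul
      (bklGen_mul_bklGen (lt_add_one _) (lt_add_one _) (by omega))
      (bklGen_mul_bklGen' (lt_add_one _) (lt_add_one _) (by omega))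

def bklGenHom : BraidGroup n →* PresentedGroup (bklRels n) :=
  PresentedGroup.toGroup lift_bklGen_eq_one

theorem bklGenHom_σ' {k : ℕ} (hk : k + 1 < n) :
    bklGenHom (σ' k : BraidGroup n) = bklGen (k + 1) k :=
  (congrArg bklGenHom (σ'_coe ⟨k, by omega⟩)).trans (PresentedGroup.toGroup.of _)

theorem bklGenHom_band {s t : ℕ} (hst : s < t) (ht : t < n) :
    bklGenHom (band t s : BraidGroup n) = bklGen t s := by
  induction t, hst using Nat.le_induction with
  | base => rw [band_succ_self, bklGenHom_σ' ht]
  | succ t hst ih =>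
    rw [band_succ hst, map_mul, map_mul, map_inv, bklGenHom_σ' ht, ih (by omega),
      bklGen_mul_bklGen hst (lt_add_one t) ht, mul_inv_cancel_right]

theorem bandHom_bklGen {s t : ℕ} (hst : s < t) (ht : t < n) :
    bandHom (bklGen t s : PresentedGroup (bklRels n)) = band t s := by
  rw [bklGen_eq hst ht]
  exact bandHom_of (t := ⟨t, ht⟩) hst

end

/-- **Birman–Ko–Lee.** The group presented by generators `a_{ts}` (`s < t`) and the
Birman–Ko–Lee relations is isomorphic to the braid group `Br_n` via
`a_{ts} ↦ (σ_{t-1} ⋯ σ_{s+1}) σ_s (σ_{s+1}⁻¹ ⋯ σ_{t-1}⁻¹)`. -/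
theorem birman_ko_lee_presentation (n : ℕ) :
    ∃ φ : PresentedGroup (bklRels n) ≃* BraidGroup n,
      ∀ (t s : Fin n) (h : s < t),
        φ (PresentedGroup.of (⟨(t, s), h⟩ : BKLGen n)) = band (t : ℕ) (s : ℕ) := by
  refine ⟨bandHom.toMulEquiv bklGenHom ?_ ?_, fun t s h => bandHom_of h⟩
  · refine PresentedGroup.ext fun ⟨(t, s), h⟩ => ?_
    exact ((congrArg bklGenHom (bandHom_of h)).trans (bklGenHom_band h t.isLt)).trans
      (bklGen_eq h t.isLt)
  · refine PresentedGroup.ext fun i => ?_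
    show bandHom (bklGenHom (σ i)) = σ i
    rw [← σ'_coe, bklGenHom_σ' (by omega), bandHom_bklGen (lt_add_one _) (by omega),
      band_succ_self]
end

section
/- In the braid group Br_m, the elements s_{1,m}, s_{2,m}, …, s_{m-1,m} freely generate a free subgroup of rank m-1; that is, the homomorphism from the free group on m-1 generators y_1, …, y_{m-1} to Br_m sending y_i ↦ s_{i,m} is injective. -/
/-- The pure braid generator `s_{i,j} = σ_{j-1} ⋯ σ_{i+1} σ_i² σ_{i+1}⁻¹ ⋯ σ_{j-1}⁻¹` of
`Br_m`, for `i < j` (0-indexed strands `0, …, m-1`). -/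
def pureGen {m : ℕ} (i j : ℕ) : BraidGroup m :=
  descProd i j * (σ' i) ^ 2 * (descProd i j)⁻¹

/-!
Let `ρ : Br_{n+1} → Aut(F_{n+1})` be the Artin representation on the free group with basis
`x_0, …, x_n`, and let `q : F_{n+1} → F_{n+1}` kill `x_n`. The automorphism `ρ(s_{i,n})` fixes
`x_j` for `j ≠ i, n`, sends `x_n` to `C_i x_n C_i⁻¹` with `C_i = W⁻¹ x_i W`,
`W = x_{i+1} ⋯ x_{n-1}`, and satisfies `q ∘ ρ(s_{i,n}) = q`. Hence for every word `w` in the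
`s_{i,n}`, `ρ(w)` conjugates `x_n` by some `c_w`, and `w ↦ q(c_w)` is the homomorphism
`y_i ↦ C_i⁻¹`, which is injective because the `C_i` are a basis of `⟨x_0, …, x_{n-1}⟩`.
If `ρ(w) = 1`, then `c_w` commutes with `x_n`; letting `F` act on `ℤ[F]` by `x_n ↦ (· + 1)` and
`x_j ↦ [x_j] · (·)` shows that then `q(c_w) = 1`, so `w = 1`.
-/

/-- A model of `ℤ[G] ⋊ G`: permutations `r ↦ r₀ + [g] * r` of `ℤ[G]`, paired with `g`. -/
def MonoidAlgebra.affinePerms (G : Type*) [Group G] :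
    Subgroup (Equiv.Perm (MonoidAlgebra ℤ G) × G) where
  carrier := {p | ∀ r, p.1 r = p.1 0 + of ℤ G p.2 * r}
  one_mem' r := by
    simp only [Prod.fst_one, Prod.snd_one, map_one, one_mul, Equiv.Perm.one_apply, zero_add]
  mul_mem' {p q} hp hq r := by
    simp only [Prod.fst_mul, Prod.snd_mul, Equiv.Perm.mul_apply, map_mul]
    rw [hq r, hp, hp (q.1 0), mul_add, mul_assoc, add_assoc]
  inv_mem' {p} hp r := by
    have key : ∀ s, p.1⁻¹ s = of ℤ G p.2⁻¹ * (s - p.1 0) := fun s => by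
      rw [Equiv.Perm.inv_eq_iff_eq, hp, ← mul_assoc, ← map_mul, mul_inv_cancel, map_one,
        one_mul, add_sub_cancel]
    simp only [Prod.fst_inv, Prod.snd_inv, key, zero_sub, mul_sub, mul_neg]
    abel

namespace FreeGroup

variable {α : Type*} [DecidableEq α]

def killOf (a : α) : FreeGroup α →* FreeGroup α :=
  lift fun b => if b = a then 1 else of b

theorem killOf_of_self (a : α) : killOf a (of a) = 1 := by
  rw [killOf, lift_apply_of, if_pos rfl]

theorem killOf_of_of_ne {a b : α} (h : b ≠ a) : killOf a (of b) = of b := by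
  rw [killOf, lift_apply_of, if_neg h]

noncomputable def lamplighter (a : α) :
    FreeGroup α →* MonoidAlgebra.affinePerms (FreeGroup α) :=
  lift fun b => if b = a then
      ⟨(Equiv.addRight 1, 1), fun r => by
        simp only [Equiv.coe_addRight, _root_.map_one, one_mul, zero_add, add_comm]⟩
    else ⟨(Units.mulLeft ((MonoidAlgebra.of ℤ _).toHomUnits (of b)), of b), fun r => by simp⟩

theorem snd_lamplighter (a : α) (c : FreeGroup α) : (lamplighter a c).1.2 = killOf a c := by
  suffices (MonoidHom.snd _ _).comp ((Subgroup.subtype _).comp (lamplighter a)) = killOf a from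
    DFunLike.congr_fun this c
  ext b
  simp only [lamplighter, killOf, MonoidHom.comp_apply, lift_apply_of]
  split_ifs <;> rfl

/-- `c` commutes with the translation by `1`, so its linear part `[killOf a c]` is `1`. -/
theorem killOf_eq_one_of_commute {a : α} {c : FreeGroup α} (h : Commute c (of a)) :
    killOf a c = 1 := by
  have hτ : (lamplighter a (of a)).1.1 = Equiv.addRight 1 := by simp [lamplighter]
  have hcomm := congrArg (fun p : MonoidAlgebra.affinePerms (FreeGroup α) => p.1.1 0)
    (h.map (lamplighter a)).eq
  simp only [Subgroup.coe_mul, Prod.fst_mul, Equiv.Perm.mul_apply, hτ, Equiv.coe_addRight,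
    zero_add] at hcomm
  rw [(lamplighter a c).2 1, mul_one, add_right_inj] at hcomm
  rw [← snd_lamplighter]
  exact MonoidAlgebra.of_injective (by rwa [_root_.map_one])

end FreeGroup

namespace BraidGroup

open FreeGroup (of lift ext_hom lift_apply_of)

/-- The generator `x_j` of `FreeGroup (Fin N)`, as a total function of `j` (`1` for `j ≥ N`). -/
def gen (N j : ℕ) : FreeGroup (Fin N) := if h : j < N then of ⟨j, h⟩ else 1

def icoProd (N j k : ℕ) : FreeGroup (Fin N) := ((List.range' j (k - j)).map (gen N)).prod

section FreeGenerators

variable {N : ℕ}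

theorem gen_of_le {j : ℕ} (h : N ≤ j) : gen N j = 1 := dif_neg (by omega)

theorem of_eq_gen (k : Fin N) : of k = gen N k := by rw [gen, dif_pos k.2]

theorem lift_gen {G : Type*} [Group G] (f : ℕ → G) (hf : ∀ j, N ≤ j → f j = 1) (j : ℕ) :
    lift (fun k : Fin N => f k) (gen N j) = f j := by
  by_cases h : j < N
  · rw [gen, dif_pos h, lift_apply_of]
  · rw [gen_of_le (by omega), map_one, hf j (by omega)]

theorem hom_ext_gen {G : Type*} [Group G] {f g : FreeGroup (Fin N) →* G}
    (h : ∀ j < N, f (gen N j) = g (gen N j)) : f = g :=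
  ext_hom _ _ fun k => by simpa only [of_eq_gen] using h k k.2

theorem mulAut_ext_gen {e₁ e₂ : MulAut (FreeGroup (Fin N))}
    (h : ∀ j < N, e₁ (gen N j) = e₂ (gen N j)) : e₁ = e₂ :=
  MulEquiv.toMonoidHom_injective (hom_ext_gen h)

theorem icoProd_of_le {j k : ℕ} (h : k ≤ j) : icoProd N j k = 1 := by
  simp [icoProd, Nat.sub_eq_zero_of_le h]

theorem icoProd_eq_gen_mul {j k : ℕ} (h : j < k) :
    icoProd N j k = gen N j * icoProd N (j + 1) k := by
  rw [icoProd, show k - j = k - (j + 1) + 1 by omega, List.range'_succ, List.map_cons,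
    List.prod_cons, icoProd]

theorem icoProd_succ_right {j k : ℕ} (h : j ≤ k) :
    icoProd N j (k + 1) = icoProd N j k * gen N k := by
  rw [icoProd, show k + 1 - j = k - j + 1 by omega, List.range'_concat, List.map_append,
    List.prod_append, List.map_singleton, List.prod_singleton, icoProd, one_mul,
    show j + (k - j) = k by omega]

theorem map_icoProd_of_forall {M : Type*} [FunLike M (FreeGroup (Fin N)) (FreeGroup (Fin N))]
    [MonoidHomClass M (FreeGroup (Fin N)) (FreeGroup (Fin N))] (f : M) {j k : ℕ}
    (hf : ∀ l, j ≤ l → l < k → f (gen N l) = gen N l) : f (icoProd N j k) = icoProd N j k := by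
  rw [icoProd, map_list_prod, List.map_map]
  refine congrArg List.prod (List.map_congr_left fun l hl => ?_)
  rw [List.mem_range'_1] at hl
  exact hf l hl.1 (by omega)

theorem map_icoProd_telescope {G : Type*} [Group G] (f : FreeGroup (Fin N) →* G) (V : ℕ → G)
    {j k : ℕ} (hjk : j ≤ k) (hf : ∀ l, j ≤ l → l < k → f (gen N l) = (V l)⁻¹ * V (l + 1)) :
    f (icoProd N j k) = (V j)⁻¹ * V k := by
  induction k, hjk using Nat.le_induction with
  | base => rw [icoProd_of_le le_rfl, map_one, inv_mul_cancel]
  | succ k hjk ih =>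
    rw [icoProd_succ_right hjk, map_mul, ih fun l h1 h2 => hf l h1 (by omega),
      hf k hjk (by omega), mul_assoc, mul_inv_cancel_left]

end FreeGenerators

variable {n : ℕ}

def artinFun (n i j : ℕ) : FreeGroup (Fin (n + 1)) :=
  if j = i then gen _ i * gen _ (i + 1) * (gen _ i)⁻¹ else if j = i + 1 then gen _ i else gen _ j

def artinInvFun (n i j : ℕ) : FreeGroup (Fin (n + 1)) :=
  if j = i then gen _ (i + 1) else if j = i + 1 then (gen _ (i + 1))⁻¹ * gen _ i * gen _ (i + 1)
  else gen _ j

def artinHom (i : Fin n) : FreeGroup (Fin (n + 1)) →* FreeGroup (Fin (n + 1)) :=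
  lift fun k => artinFun n i k

def artinInvHom (i : Fin n) : FreeGroup (Fin (n + 1)) →* FreeGroup (Fin (n + 1)) :=
  lift fun k => artinInvFun n i k

theorem artinHom_gen (i : Fin n) (j : ℕ) : artinHom i (gen _ j) = artinFun n i j :=
  lift_gen _ (fun j hj => by
    rw [artinFun, if_neg (by omega), if_neg (by omega), gen_of_le hj]) j

theorem artinInvHom_gen (i : Fin n) (j : ℕ) : artinInvHom i (gen _ j) = artinInvFun n i j :=
  lift_gen _ (fun j hj => by
    rw [artinInvFun, if_neg (by omega), if_neg (by omega), gen_of_le hj]) j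

def artin (i : Fin n) : MulAut (FreeGroup (Fin (n + 1))) :=
  MonoidHom.toMulEquiv (artinHom i) (artinInvHom i)
    (hom_ext_gen fun k _ => by
      simp only [MonoidHom.comp_apply, MonoidHom.id_apply, artinHom_gen, artinFun]
      split_ifs <;> simp only [map_mul, map_inv, artinInvHom_gen, artinInvFun] <;>
        split_ifs <;> subst_vars <;> first | omega | group)
    (hom_ext_gen fun k _ => by
      simp only [MonoidHom.comp_apply, MonoidHom.id_apply, artinInvHom_gen, artinInvFun]
      split_ifs <;> simp only [map_mul, map_inv, artinHom_gen, artinFun] <;>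
        split_ifs <;> subst_vars <;> first | omega | group)

theorem artin_gen (i : Fin n) (j : ℕ) : artin i (gen _ j) = artinFun n i j :=
  artinHom_gen i j

theorem artin_gen_self (i : Fin n) :
    artin i (gen _ i) = gen _ i * gen _ (i + 1) * (gen _ i)⁻¹ := by
  rw [artin_gen, artinFun, if_pos rfl]

theorem artin_gen_succ (i : Fin n) : artin i (gen _ (i + 1)) = gen _ i := by
  rw [artin_gen, artinFun, if_neg (by omega), if_pos rfl]

theorem artin_gen_of_ne (i : Fin n) {j : ℕ} (h₁ : j ≠ i) (h₂ : j ≠ i + 1) :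
    artin i (gen _ j) = gen _ j := by
  rw [artin_gen, artinFun, if_neg h₁, if_neg h₂]

theorem artin_mul_artin_of_add_one_lt {i j : Fin n} (h : (i : ℕ) + 1 < j) :
    artin i * artin j = artin j * artin i :=
  mulAut_ext_gen fun k _ => by
    simp only [MulAut.mul_apply, artin_gen, artinFun]
    split_ifs <;> simp only [map_mul, map_inv, artin_gen, artinFun] <;> split_ifs <;>
      subst_vars <;> first | omega | group

theorem artin_braid {i j : Fin n} (h : (i : ℕ) + 1 = j) :
    artin i * artin j * artin i = artin j * artin i * artin j := by
  obtain ⟨j, hj⟩ := j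
  subst h
  refine mulAut_ext_gen fun k _ => ?_
  simp only [MulAut.mul_apply, artin_gen, artinFun]
  split_ifs <;> simp only [map_mul, map_inv, artin_gen, artinFun] <;> split_ifs <;>
    simp only [map_mul, map_inv, artin_gen, artinFun] <;> split_ifs <;> subst_vars <;>
    first | omega | group

theorem artin_braidRels :
    ∀ r ∈ braidRels n, lift (fun i : Fin n => artin i) r = 1 := by
  rintro r (⟨i, j, hij, rfl⟩ | ⟨i, j, hij, rfl⟩) <;>
    simp only [map_mul, map_inv, lift_apply_of]
  · rw [artin_mul_artin_of_add_one_lt hij, mul_inv_cancel_right, mul_inv_cancel]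
  · rw [artin_braid hij, mul_inv_cancel]

def artinRep (n : ℕ) : BraidGroup (n + 1) →* MulAut (FreeGroup (Fin (n + 1))) :=
  PresentedGroup.toGroup artin_braidRels

theorem artinRep_σ' {k : ℕ} (hk : k < n) : artinRep n (σ' k) = artin ⟨k, hk⟩ := by
  rw [σ', dif_pos (by omega)]
  exact PresentedGroup.toGroup.of artin_braidRels

theorem descProd_eq_mul_σ' {i : ℕ} (h : i + 1 < n) :
    descProd (n := n + 1) i n = descProd (i + 1) n * σ' (i + 1) := by
  rw [descProd, descProd, show n - 1 - i = n - 1 - (i + 1) + 1 by omega, List.range_succ,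
    List.map_append, List.prod_append, List.map_singleton, List.prod_singleton,
    show n - 1 - (n - 1 - (i + 1)) = i + 1 by omega]

theorem descProd_of_le {i : ℕ} (h : n ≤ i + 1) : descProd (n := n + 1) i n = 1 := by
  simp [descProd, show n - 1 - i = 0 by omega]

theorem artinRep_descProd_gen {i : ℕ} (hi : i < n) {j : ℕ} (hj : j ≤ n) :
    artinRep n (descProd i n) (gen _ j) =
      if j ≤ i then gen _ j
      else if j = i + 1 then icoProd _ (i + 1) n * gen _ n * (icoProd _ (i + 1) n)⁻¹
      else gen _ (j - 1) := by
  have hi' : i ≤ n - 1 := by omega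
  clear hi
  induction hi' using Nat.decreasingInduction generalizing j with
  | self =>
    rw [descProd_of_le (by omega), map_one, MulAut.one_apply,
      icoProd_of_le (j := n - 1 + 1) (by omega), inv_one, mul_one, one_mul]
    split_ifs <;> first | rfl | omega | (congr 1; omega)
  | of_succ i hi' ih =>
    rw [descProd_eq_mul_σ' (by omega), map_mul, MulAut.mul_apply, artinRep_σ' (by omega),
      artin_gen, artinFun]
    dsimp only
    split_ifs <;> simp (disch := omega) only [map_mul, map_inv, ih] <;> split_ifs <;>
      subst_vars <;> first | omega | rfl | (congr 1; omega) |
        (rw [icoProd_eq_gen_mul (j := i + 1) (by omega)]; group)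

theorem artinRep_pureGen_descProd {i : ℕ} (hi : i < n) (y : FreeGroup (Fin (n + 1))) :
    artinRep n (pureGen i n) (artinRep n (descProd i n) y) =
      artinRep n (descProd i n) (artin ⟨i, hi⟩ (artin ⟨i, hi⟩ y)) := by
  rw [pureGen, map_mul, map_mul, map_inv, map_pow, artinRep_σ' hi]
  simp only [MulAut.mul_apply, pow_two, MulAut.inv_apply_self]

theorem artinRep_pureGen_gen_of_ne {i j : ℕ} (hi : i < n) (hj : j < n) (hji : j ≠ i) :
    artinRep n (pureGen i n) (gen _ j) = gen _ j := by
  obtain ⟨j', hj'i, hj'i1, hDj'⟩ : ∃ j', j' ≠ i ∧ j' ≠ i + 1 ∧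
      artinRep n (descProd i n) (gen _ j') = gen _ j := by
    rcases Nat.lt_or_gt_of_ne hji with h | h
    · exact ⟨j, hji, by omega, by rw [artinRep_descProd_gen hi (by omega), if_pos h.le]⟩
    · refine ⟨j + 1, by omega, by omega, ?_⟩
      rw [artinRep_descProd_gen hi (by omega), if_neg (by omega), if_neg (by omega),
        Nat.add_sub_cancel]
  rw [← hDj', artinRep_pureGen_descProd hi, artin_gen_of_ne _ hj'i hj'i1,
    artin_gen_of_ne _ hj'i hj'i1]

def conjugator (n i : ℕ) : FreeGroup (Fin (n + 1)) :=
  (icoProd _ (i + 1) n)⁻¹ * gen _ i * icoProd _ (i + 1) n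

theorem artinRep_pureGen_gen_last {i : ℕ} (hi : i < n) :
    artinRep n (pureGen i n) (gen _ n) = conjugator n i * gen _ n * (conjugator n i)⁻¹ := by
  have hW : artinRep n (pureGen i n) (icoProd _ (i + 1) n) = icoProd _ (i + 1) n :=
    map_icoProd_of_forall _ fun l hl hln => artinRep_pureGen_gen_of_ne hi hln (by omega)
  have hD := artinRep_descProd_gen hi (j := i + 1) (by omega)
  rw [if_neg (by omega), if_pos rfl] at hD
  have hlast : gen _ n = (icoProd _ (i + 1) n)⁻¹ * artinRep n (descProd i n) (gen _ (i + 1)) *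
      icoProd (n + 1) (i + 1) n := by
    rw [hD]; group
  rw [hlast, map_mul, map_mul, map_inv, hW, artinRep_pureGen_descProd hi,
    artin_gen_succ ⟨i, hi⟩, artin_gen_self ⟨i, hi⟩]
  simp only [map_mul, map_inv, hD]
  rw [artinRep_descProd_gen hi (by omega), if_pos le_rfl, conjugator]
  group

abbrev killLast (n : ℕ) : FreeGroup (Fin (n + 1)) →* FreeGroup (Fin (n + 1)) :=
  FreeGroup.killOf (Fin.last n)

theorem killLast_gen_of_lt {j : ℕ} (hj : j < n) : killLast n (gen _ j) = gen _ j := by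
  rw [gen, dif_pos (by omega), FreeGroup.killOf_of_of_ne (Fin.ne_of_val_ne hj.ne)]

theorem killLast_gen_last : killLast n (gen _ n) = 1 := by
  rw [gen, dif_pos n.lt_succ_self]
  exact FreeGroup.killOf_of_self _

theorem killLast_icoProd {j k : ℕ} (hk : k ≤ n) : killLast n (icoProd _ j k) = icoProd _ j k :=
  map_icoProd_of_forall _ fun _ _ hl => killLast_gen_of_lt (by omega)

theorem killLast_conjugator {i : ℕ} (hi : i < n) :
    killLast n (conjugator n i) = conjugator n i := by
  rw [conjugator, map_mul, map_mul, map_inv, killLast_icoProd le_rfl, killLast_gen_of_lt hi]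

theorem killLast_comp_artinRep_pureGen {i : ℕ} (hi : i < n) :
    (killLast n).comp (artinRep n (pureGen i n)).toMonoidHom = killLast n := by
  refine hom_ext_gen fun j hj => ?_
  simp only [MonoidHom.comp_apply, MulEquiv.coe_toMonoidHom]
  rcases lt_trichotomy j i with h | rfl | h
  · rw [artinRep_pureGen_gen_of_ne hi (by omega) h.ne]
  · have hD := artinRep_descProd_gen hi (j := j) (by omega)
    rw [if_pos le_rfl] at hD
    rw [← hD, artinRep_pureGen_descProd hi, artin_gen_self ⟨j, hi⟩]
    simp only [map_mul, map_inv, artin_gen_self ⟨j, hi⟩, artin_gen_succ ⟨j, hi⟩, hD]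
    rw [artinRep_descProd_gen hi (by omega), if_neg (by omega), if_pos rfl]
    simp only [map_mul, map_inv, killLast_icoProd le_rfl, killLast_gen_last,
      killLast_gen_of_lt hi]
    group
  · rcases Nat.lt_or_ge j n with hjn | hjn
    · rw [artinRep_pureGen_gen_of_ne hi hjn h.ne']
    · obtain rfl : j = n := by omega
      rw [artinRep_pureGen_gen_last hi, map_mul, map_mul, map_inv, killLast_gen_last]
      group

def conjugatorHom (n : ℕ) : FreeGroup (Fin n) →* FreeGroup (Fin (n + 1)) :=
  lift fun i => (conjugator n i)⁻¹

/-- Chosen so that `x_j ⋯ x_{n-1}` telescopes to `(y_j ⋯ y_{n-1})⁻¹`. -/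
def untwist (n : ℕ) : FreeGroup (Fin (n + 1)) →* FreeGroup (Fin n) :=
  lift fun k => (icoProd n k n)⁻¹ * icoProd n (k + 1) n

theorem untwist_gen (j : ℕ) : untwist n (gen _ j) = (icoProd n j n)⁻¹ * icoProd n (j + 1) n :=
  lift_gen (fun k => (icoProd n k n)⁻¹ * icoProd n (k + 1) n)
    (fun j hj => by rw [icoProd_of_le (by omega), icoProd_of_le (by omega), inv_one, mul_one]) j

theorem untwist_icoProd {j : ℕ} (hj : j ≤ n) :
    untwist n (icoProd _ j n) = (icoProd n j n)⁻¹ := by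
  rw [map_icoProd_telescope _ (icoProd n · n) hj fun l _ _ => untwist_gen l,
    icoProd_of_le le_rfl, mul_one]

theorem untwist_conjugator {i : ℕ} (hi : i < n) : untwist n (conjugator n i) = (gen n i)⁻¹ := by
  rw [conjugator, map_mul, map_mul, map_inv, untwist_icoProd hi, untwist_gen,
    icoProd_eq_gen_mul (N := n) hi]
  group

theorem conjugatorHom_injective : Function.Injective (conjugatorHom n) := by
  refine Function.LeftInverse.injective (g := untwist n) fun w => ?_
  suffices (untwist n).comp (conjugatorHom n) = MonoidHom.id _ from DFunLike.congr_fun this w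
  refine ext_hom _ _ fun i => ?_
  rw [MonoidHom.comp_apply, conjugatorHom, lift_apply_of, map_inv, untwist_conjugator i.2,
    inv_inv, MonoidHom.id_apply, of_eq_gen]

def conjLastSubgroup (n : ℕ) :
    Subgroup (FreeGroup (Fin (n + 1)) ⋊[MonoidHom.id _] MulAut (FreeGroup (Fin (n + 1)))) where
  carrier := {p | p.right (gen _ n) = p.left⁻¹ * gen _ n * p.left ∧
    ∀ z, killLast n (p.right z) = killLast n z}
  one_mem' := ⟨by simp, fun z => rfl⟩
  mul_mem' {p q} hp hq := by
    refine ⟨?_, fun z => ?_⟩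
    · simp only [SemidirectProduct.mul_left, SemidirectProduct.mul_right, MonoidHom.id_apply,
        MulAut.mul_apply, hq.1, map_mul, map_inv, hp.1]
      group
    · simp only [SemidirectProduct.mul_right, MulAut.mul_apply, hp.2, hq.2]
  inv_mem' {p} hp := by
    have hinv : ∀ z, killLast n (p.right⁻¹ z) = killLast n z := fun z => by
      rw [← hp.2 (p.right⁻¹ z), MulAut.apply_inv_self]
    refine ⟨?_, hinv⟩
    simp only [SemidirectProduct.inv_left, SemidirectProduct.inv_right, MonoidHom.id_apply]
    apply p.right.injective
    simp only [map_mul, map_inv, MulAut.apply_inv_self, inv_inv, hp.1]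
    group

def conjugatorModLast (n : ℕ) : conjLastSubgroup n →* FreeGroup (Fin (n + 1)) where
  toFun p := killLast n p.1.left
  map_one' := map_one _
  map_mul' p q := by
    simp only [Subgroup.coe_mul, SemidirectProduct.mul_left, MonoidHom.id_apply, map_mul, p.2.2]

def pureGenLift (n : ℕ) : FreeGroup (Fin n) →* conjLastSubgroup n :=
  lift fun i => ⟨⟨(conjugator n i)⁻¹, artinRep n (pureGen i n)⟩,
    by rw [artinRep_pureGen_gen_last i.2, inv_inv],
    fun z => DFunLike.congr_fun (killLast_comp_artinRep_pureGen i.2) z⟩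

theorem right_pureGenLift (w : FreeGroup (Fin n)) :
    (pureGenLift n w).1.right =
      artinRep n (lift (fun i : Fin n => pureGen (m := n + 1) i n) w) := by
  suffices SemidirectProduct.rightHom.comp ((conjLastSubgroup n).subtype.comp (pureGenLift n)) =
      (artinRep n).comp (lift fun i : Fin n => pureGen (m := n + 1) i n) from
    DFunLike.congr_fun this w
  refine ext_hom _ _ fun i => ?_
  simp only [MonoidHom.comp_apply, pureGenLift, lift_apply_of]
  rfl

theorem conjugatorModLast_comp_pureGenLift :
    (conjugatorModLast n).comp (pureGenLift n) = conjugatorHom n :=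
  ext_hom _ _ fun i => by
    simp only [MonoidHom.comp_apply, pureGenLift, conjugatorHom, lift_apply_of]
    exact (map_inv _ _).trans (congrArg _ (killLast_conjugator i.2))

theorem injective_lift_pureGen (n : ℕ) :
    Function.Injective (lift fun i : Fin n => pureGen (m := n + 1) i n) := by
  refine (injective_iff_map_eq_one _).mpr fun w hw => ?_
  have hright : (pureGenLift n w).1.right = 1 := by rw [right_pureGenLift, hw, map_one]
  have hcomm : Commute (pureGenLift n w).1.left (of (Fin.last n)) := by
    have hconj := (pureGenLift n w).2.1
    rw [hright, MulAut.one_apply] at hconj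
    rw [of_eq_gen, Fin.val_last, Commute, SemiconjBy]
    conv_lhs => rw [hconj]
    group
  have hC : conjugatorHom n w = 1 := by
    rw [← conjugatorModLast_comp_pureGenLift]
    exact FreeGroup.killOf_eq_one_of_commute hcomm
  exact (injective_iff_map_eq_one _).mp conjugatorHom_injective w hC

end BraidGroup

/-- The elements `s_{1,m}, …, s_{m-1,m}` (here 0-indexed as `s_{i,m-1}`, `i = 0, …, m-2`)
freely generate a free subgroup of `Br_m` of rank `m-1`: the homomorphism from the
free group of rank `m-1` sending the `i`-th generator to `s_{i,m}` is injective. -/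
theorem pure_braid_last_column_free (m : ℕ) :
    Function.Injective
      (FreeGroup.lift (fun i : Fin (m - 1) => pureGen (m := m) (i : ℕ) (m - 1))) := by
  cases m with
  | zero => exact Function.injective_of_subsingleton (α := FreeGroup (Fin 0)) _
  | succ n => exact BraidGroup.injective_lift_pureGen n
end

section
/- The positive braid monoid Br_n^+ is left and right cancellative: for all A, B, X, Y ∈ Br_n^+, if A X B = A Y B then X = Y (in particular A X = A Y implies X = Y, and X B = Y B implies X = Y). -/
/-- The braid relations on the free monoid on `m` generators `σ_1, …, σ_m` (0-indexed):
`σ_i σ_j = σ_j σ_i` for `|i - j| > 1` and `σ_i σ_{i+1} σ_i = σ_{i+1} σ_i σ_{i+1}`. -/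
def braidMonoidRels (m : ℕ) : FreeMonoid (Fin m) → FreeMonoid (Fin m) → Prop := fun a b =>
  (∃ i j : Fin m, (i : ℕ) + 1 < (j : ℕ) ∧
    a = FreeMonoid.of i * FreeMonoid.of j ∧ b = FreeMonoid.of j * FreeMonoid.of i) ∨
  (∃ i j : Fin m, (i : ℕ) + 1 = (j : ℕ) ∧
    a = FreeMonoid.of i * FreeMonoid.of j * FreeMonoid.of i ∧
    b = FreeMonoid.of j * FreeMonoid.of i * FreeMonoid.of j)

/-- The positive braid monoid `Br_n⁺`, presented by the generators `σ_1, …, σ_{n-1}`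
(0-indexed) and the braid relations. -/
abbrev BraidMonoid (n : ℕ) : Type := PresentedMonoid (braidMonoidRels (n - 1))

/-- The standard generator `σ_{i+1}` of `Br_n⁺` (0-indexed). -/
def σp {n : ℕ} (i : Fin (n - 1)) : BraidMonoid n :=
  PresentedMonoid.of (braidMonoidRels (n - 1)) i

/-!
Garside's argument. Let `c(i, j)` (`complement i j`) be the word such that `i c(i, j) ≡ j c(j, i)`
is the least common multiple of the generators `i` and `j`: empty if `i = j`, `j` if they
commute, `j i` if they are adjacent. The key fact is that `i u ≡ j v` forces `u ≡ c(i, j) z` and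
`v ≡ c(j, i) z` for a common `z`. It is proved by induction on the length of `u` and, inside,
along a rewriting chain from `i u` to `j v`: a rewrite away from the first letter is harmless,
and a rewrite of the first letter leads to a case analysis on the three generators involved in
which every case is settled by the statement for shorter words. For `i = j` this is left
cancellation of a letter; right cancellation follows by reversing words, which preserves the
relations.
-/

open Relation

namespace PresentedMonoid

variable {α : Type*} {rels : FreeMonoid α → FreeMonoid α → Prop}

variable (rels) in
def RewriteStep (a b : List α) : Prop :=
  ∃ p x y q, SymmGen rels (.ofList x) (.ofList y) ∧ a = p ++ x ++ q ∧ b = p ++ y ++ q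

theorem RewriteStep.symm {a b : List α} (h : RewriteStep rels a b) : RewriteStep rels b a :=
  let ⟨p, x, y, q, hxy, ha, hb⟩ := h
  ⟨p, y, x, q, hxy.symm, hb, ha⟩

instance : Std.Symm (RewriteStep rels) := ⟨fun _ _ => RewriteStep.symm⟩

theorem RewriteStep.append_left {a b : List α} (c : List α) (h : RewriteStep rels a b) :
    RewriteStep rels (c ++ a) (c ++ b) := by
  obtain ⟨p, x, y, q, hxy, rfl, rfl⟩ := h
  exact ⟨c ++ p, x, y, q, hxy, by simp, by simp⟩

theorem RewriteStep.append_right {a b : List α} (c : List α) (h : RewriteStep rels a b) :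
    RewriteStep rels (a ++ c) (b ++ c) := by
  obtain ⟨p, x, y, q, hxy, rfl, rfl⟩ := h
  exact ⟨p, x, y, q ++ c, hxy, by simp, by simp⟩

theorem reflTransGen_rewriteStep_append {a b c d : List α}
    (hab : ReflTransGen (RewriteStep rels) a b) (hcd : ReflTransGen (RewriteStep rels) c d) :
    ReflTransGen (RewriteStep rels) (a ++ c) (b ++ d) :=
  (ReflTransGen.lift (· ++ c) (fun _ _ => RewriteStep.append_right c) a b hab).trans
    (ReflTransGen.lift (b ++ ·) (fun _ _ => RewriteStep.append_left b) c d hcd)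

theorem conGen_ofList_of_reflTransGen {a b : List α} (h : ReflTransGen (RewriteStep rels) a b) :
    conGen rels (.ofList a) (.ofList b) := by
  induction h with
  | refl => exact (conGen rels).refl _
  | tail _ hstep ih =>
    obtain ⟨p, x, y, q, hxy, rfl, rfl⟩ := hstep
    have hxy' : conGen rels (.ofList x) (.ofList y) :=
      hxy.elim (.of _ _) fun h => .symm (.of _ _ h)
    refine ih.trans ?_
    simpa only [FreeMonoid.ofList_append] using
      (((conGen rels).refl _).mul hxy').mul ((conGen rels).refl _)

theorem mk_eq_mk_iff_reflTransGen {a b : FreeMonoid α} :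
    mk rels a = mk rels b ↔ ReflTransGen (RewriteStep rels) a.toList b.toList := by
  rw [mk_eq_mk_iff]
  constructor
  · intro h
    induction h with
    | of x y h => exact .single ⟨[], x.toList, y.toList, [], .inl h, by simp, by simp⟩
    | refl => exact .refl
    | symm _ ih => exact symm ih
    | trans _ _ ih₁ ih₂ => exact ih₁.trans ih₂
    | mul _ _ ih₁ ih₂ => exact reflTransGen_rewriteStep_append ih₁ ih₂
  · exact conGen_ofList_of_reflTransGen

end PresentedMonoid

namespace BraidWord

open PresentedMonoid

variable {m : ℕ}

def Adjacent (i j : Fin m) : Prop := (i : ℕ) + 1 = j ∨ (j : ℕ) + 1 = i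

def Distant (i j : Fin m) : Prop := (i : ℕ) + 1 < j ∨ (j : ℕ) + 1 < i

instance : DecidableRel (Adjacent (m := m)) := fun _ _ => inferInstanceAs (Decidable (_ ∨ _))

theorem Adjacent.ne {i j : Fin m} (h : Adjacent i j) : i ≠ j := by
  rintro rfl; unfold Adjacent at h; omega

theorem Distant.ne {i j : Fin m} (h : Distant i j) : i ≠ j := by
  rintro rfl; unfold Distant at h; omega

theorem Distant.not_adjacent {i j : Fin m} (h : Distant i j) : ¬ Adjacent i j := by
  unfold Distant at h; unfold Adjacent; omega

theorem Adjacent.symm {i j : Fin m} (h : Adjacent i j) : Adjacent j i := Or.symm h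

theorem Distant.symm {i j : Fin m} (h : Distant i j) : Distant j i := Or.symm h

theorem eq_or_adjacent_or_distant (i j : Fin m) : i = j ∨ Adjacent i j ∨ Distant i j := by
  rw [Fin.ext_iff, Adjacent, Distant]
  omega

theorem symmGen_braidMonoidRels_iff {x y : List (Fin m)} :
    SymmGen (braidMonoidRels m) (.ofList x) (.ofList y) ↔
      (∃ i j, Distant i j ∧ x = [i, j] ∧ y = [j, i]) ∨
        ∃ i j, Adjacent i j ∧ x = [i, j, i] ∧ y = [j, i, j] := by
  constructor
  · rintro ((⟨i, j, h, rfl, rfl⟩ | ⟨i, j, h, rfl, rfl⟩) |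
      (⟨i, j, h, rfl, rfl⟩ | ⟨i, j, h, rfl, rfl⟩))
    · exact .inl ⟨i, j, .inl h, rfl, rfl⟩
    · exact .inr ⟨i, j, .inl h, rfl, rfl⟩
    · exact .inl ⟨j, i, .inr h, rfl, rfl⟩
    · exact .inr ⟨j, i, .inr h, rfl, rfl⟩
  · rintro (⟨i, j, h | h, rfl, rfl⟩ | ⟨i, j, h | h, rfl, rfl⟩)
    · exact .inl (.inl ⟨i, j, h, rfl, rfl⟩)
    · exact .inr (.inl ⟨j, i, h, rfl, rfl⟩)
    · exact .inl (.inr ⟨i, j, h, rfl, rfl⟩)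
    · exact .inr (.inr ⟨j, i, h, rfl, rfl⟩)

abbrev Equivalent (u v : List (Fin m)) : Prop :=
  ReflTransGen (RewriteStep (braidMonoidRels m)) u v

local infix:50 " ≈ᵇ " => Equivalent

instance : Trans (Equivalent (m := m)) Equivalent Equivalent := ⟨ReflTransGen.trans⟩

theorem Equivalent.symm {u v : List (Fin m)} (h : u ≈ᵇ v) : v ≈ᵇ u := Std.Symm.symm _ _ h

theorem Equivalent.cons {u v : List (Fin m)} (x : Fin m) (h : u ≈ᵇ v) : x :: u ≈ᵇ x :: v :=
  reflTransGen_rewriteStep_append (.refl (a := [x])) h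

theorem Equivalent.length_eq {u v : List (Fin m)} (h : u ≈ᵇ v) : u.length = v.length := by
  induction h with
  | refl => rfl
  | tail _ hstep ih =>
    obtain ⟨p, x, y, q, hxy, rfl, rfl⟩ := hstep
    rcases symmGen_braidMonoidRels_iff.1 hxy with ⟨i, j, -, rfl, rfl⟩ | ⟨i, j, -, rfl, rfl⟩ <;>
      simpa using ih

theorem Equivalent.reverse {u v : List (Fin m)} (h : u ≈ᵇ v) : u.reverse ≈ᵇ v.reverse := by
  refine ReflTransGen.lift _ (fun a b hstep => ?_) _ _ h
  obtain ⟨p, x, y, q, hxy, rfl, rfl⟩ := hstep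
  refine ⟨q.reverse, x.reverse, y.reverse, p.reverse, ?_, by simp, by simp⟩
  rw [symmGen_braidMonoidRels_iff] at hxy ⊢
  rcases hxy with ⟨i, j, h, rfl, rfl⟩ | ⟨i, j, h, rfl, rfl⟩
  · exact .inl ⟨j, i, h.symm, rfl, rfl⟩
  · exact .inr ⟨i, j, h, rfl, rfl⟩

theorem equivalent_swap {i j : Fin m} (h : Distant i j) (t : List (Fin m)) :
    i :: j :: t ≈ᵇ j :: i :: t :=
  .single ⟨[], [i, j], [j, i], t, symmGen_braidMonoidRels_iff.2 (.inl ⟨i, j, h, rfl, rfl⟩),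
    rfl, rfl⟩

theorem equivalent_braid {i j : Fin m} (h : Adjacent i j) (t : List (Fin m)) :
    i :: j :: i :: t ≈ᵇ j :: i :: j :: t :=
  .single ⟨[], [i, j, i], [j, i, j], t,
    symmGen_braidMonoidRels_iff.2 (.inr ⟨i, j, h, rfl, rfl⟩), rfl, rfl⟩

theorem cons_append_equivalent_of_forall_distant {a : Fin m} {c : List (Fin m)}
    (h : ∀ x ∈ c, Distant a x) (w : List (Fin m)) : a :: (c ++ w) ≈ᵇ c ++ a :: w := by
  induction c with
  | nil => exact .refl
  | cons x c ih =>
    simp only [List.mem_cons, forall_eq_or_imp] at h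
    exact (equivalent_swap h.1 _).trans ((ih h.2).cons x)

theorem rewriteStep_cons_cases {i : Fin m} {u b : List (Fin m)}
    (h : RewriteStep (braidMonoidRels m) (i :: u) b) :
    (∃ u', RewriteStep (braidMonoidRels m) u u' ∧ b = i :: u') ∨
      (∃ a t, Distant i a ∧ u = a :: t ∧ b = a :: i :: t) ∨
      ∃ a t, Adjacent i a ∧ u = a :: i :: t ∧ b = a :: i :: a :: t := by
  obtain ⟨_ | ⟨c, p⟩, x, y, q, hxy, hu, rfl⟩ := h
  · rcases symmGen_braidMonoidRels_iff.1 hxy with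
      ⟨i', a, h, rfl, rfl⟩ | ⟨i', a, h, rfl, rfl⟩ <;>
      simp only [List.nil_append, List.cons_append, List.cons.injEq] at hu
    · obtain ⟨rfl, rfl⟩ := hu
      exact .inr (.inl ⟨a, q, h, rfl, rfl⟩)
    · obtain ⟨rfl, rfl⟩ := hu
      exact .inr (.inr ⟨a, q, h, rfl, rfl⟩)
  · simp only [List.cons_append, List.cons.injEq] at hu
    obtain ⟨rfl, rfl⟩ := hu
    exact .inl ⟨_, ⟨p, x, y, q, hxy, rfl, rfl⟩, rfl⟩

def complement (i j : Fin m) : List (Fin m) :=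
  if i = j then [] else if Adjacent i j then [j, i] else [j]

def FactorsThroughLcm (i j : Fin m) (u v : List (Fin m)) : Prop :=
  ∃ z, u ≈ᵇ complement i j ++ z ∧ v ≈ᵇ complement j i ++ z

theorem factorsThroughLcm_self_iff {i : Fin m} {u v : List (Fin m)} :
    FactorsThroughLcm i i u v ↔ u ≈ᵇ v := by
  simp only [FactorsThroughLcm, complement, if_pos, List.nil_append]
  exact ⟨fun ⟨_, hu, hv⟩ => hu.trans hv.symm, fun h => ⟨v, h, .refl⟩⟩

theorem factorsThroughLcm_iff_of_adjacent {i j : Fin m} (hij : Adjacent i j)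
    {u v : List (Fin m)} :
    FactorsThroughLcm i j u v ↔ ∃ z, u ≈ᵇ j :: i :: z ∧ v ≈ᵇ i :: j :: z := by
  simp [FactorsThroughLcm, complement, hij.ne, hij.ne.symm, hij, hij.symm]

theorem factorsThroughLcm_iff_of_distant {i j : Fin m} (hij : Distant i j)
    {u v : List (Fin m)} :
    FactorsThroughLcm i j u v ↔ ∃ z, u ≈ᵇ j :: z ∧ v ≈ᵇ i :: z := by
  simp [FactorsThroughLcm, complement, hij.ne, hij.ne.symm, hij.not_adjacent,
    hij.symm.not_adjacent]

theorem FactorsThroughLcm.equivalent_left {i j : Fin m} {u u' v : List (Fin m)}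
    (h : FactorsThroughLcm i j u' v) (hu : u ≈ᵇ u') : FactorsThroughLcm i j u v :=
  let ⟨z, hu', hv⟩ := h
  ⟨z, hu.trans hu', hv⟩

theorem FactorsThroughLcm.equivalent_right {i j : Fin m} {u v v' : List (Fin m)}
    (h : FactorsThroughLcm i j u v') (hv : v ≈ᵇ v') : FactorsThroughLcm i j u v :=
  let ⟨z, hu, hv'⟩ := h
  ⟨z, hu, hv.trans hv'⟩

theorem mem_complement {i j x : Fin m} (h : x ∈ complement i j) : x = j ∨ x = i := by
  unfold complement at h
  split_ifs at h <;> simp_all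

theorem FactorsThroughLcm.cons_of_distant {a i j : Fin m} {u v : List (Fin m)}
    (hai : Distant a i) (haj : Distant a j) (h : FactorsThroughLcm i j u v) :
    FactorsThroughLcm i j (a :: u) (a :: v) := by
  have hc : ∀ x, x = i ∨ x = j → Distant a x := by rintro x (rfl | rfl) <;> assumption
  obtain ⟨z, hu, hv⟩ := h
  exact ⟨a :: z,
    (hu.cons a).trans (cons_append_equivalent_of_forall_distant
      (fun x hx => hc x (mem_complement hx).symm) z),
    (hv.cons a).trans (cons_append_equivalent_of_forall_distant
      (fun x hx => hc x (mem_complement hx)) z)⟩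

def FactorsThroughLcmBelow (m N : ℕ) : Prop :=
  ∀ ⦃i j : Fin m⦄ ⦃u v : List (Fin m)⦄, u.length < N → i :: u ≈ᵇ j :: v →
    FactorsThroughLcm i j u v

section LengthInduction

variable {t : List (Fin m)}

theorem FactorsThroughLcm.swap_of_adjacent {a i j : Fin m} {v : List (Fin m)}
    (hia : Distant i a) (haj : Adjacent a j)
    (ih : FactorsThroughLcmBelow m (t.length + 1))
    (h : FactorsThroughLcm a j (i :: t) v) : FactorsThroughLcm i j (a :: t) v := by
  obtain ⟨z, hz₁, hz₂⟩ := (factorsThroughLcm_iff_of_adjacent haj).1 h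
  have ht : t.length = z.length + 1 := by simpa using hz₁.length_eq
  rcases eq_or_adjacent_or_distant i j with rfl | hij | hij
  · exact (hia.not_adjacent haj.symm).elim
  · obtain ⟨z₁, g₁, g₂⟩ := (factorsThroughLcm_iff_of_adjacent hij).1 (ih (by simp) hz₁)
    have ht₁ : t.length = z₁.length + 1 + 1 := by simpa using g₁.length_eq
    obtain ⟨z₂, g₃, g₄⟩ :=
      (factorsThroughLcm_iff_of_distant hia.symm).1 (ih (by omega) g₂)
    obtain ⟨z₃, g₅, g₆⟩ :=
      (factorsThroughLcm_iff_of_adjacent haj.symm).1 (ih (by omega) g₄)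
    refine (factorsThroughLcm_iff_of_adjacent hij).2 ⟨a :: j :: i :: z₃, ?_, ?_⟩
    · calc a :: t ≈ᵇ a :: j :: i :: z₁ := g₁.cons a
        _ ≈ᵇ a :: j :: i :: a :: j :: z₃ := ((g₅.cons i).cons j).cons a
        _ ≈ᵇ a :: j :: a :: i :: j :: z₃ := ((equivalent_swap hia _).cons j).cons a
        _ ≈ᵇ j :: a :: j :: i :: j :: z₃ := equivalent_braid haj _
        _ ≈ᵇ j :: a :: i :: j :: i :: z₃ := ((equivalent_braid hij.symm z₃).cons a).cons j
        _ ≈ᵇ j :: i :: a :: j :: i :: z₃ := (equivalent_swap hia.symm _).cons j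
    · calc v ≈ᵇ a :: j :: z := hz₂
        _ ≈ᵇ a :: j :: i :: z₂ := (g₃.cons j).cons a
        _ ≈ᵇ a :: j :: i :: j :: a :: z₃ := ((g₆.cons i).cons j).cons a
        _ ≈ᵇ a :: i :: j :: i :: a :: z₃ := (equivalent_braid hij.symm _).cons a
        _ ≈ᵇ i :: a :: j :: i :: a :: z₃ := equivalent_swap hia.symm _
        _ ≈ᵇ i :: a :: j :: a :: i :: z₃ :=
          (((equivalent_swap hia z₃).cons j).cons a).cons i
        _ ≈ᵇ i :: j :: a :: j :: i :: z₃ := (equivalent_braid haj _).cons i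
  · obtain ⟨z₁, g₁, g₂⟩ := (factorsThroughLcm_iff_of_distant hij).1 (ih (by simp) hz₁)
    obtain ⟨z₂, g₃, g₄⟩ :=
      (factorsThroughLcm_iff_of_distant hia.symm).1 (ih (by omega) g₂)
    refine (factorsThroughLcm_iff_of_distant hij).2 ⟨a :: j :: z₂, ?_, ?_⟩
    · calc a :: t ≈ᵇ a :: j :: z₁ := g₁.cons a
        _ ≈ᵇ a :: j :: a :: z₂ := (g₄.cons j).cons a
        _ ≈ᵇ j :: a :: j :: z₂ := equivalent_braid haj _
    · calc v ≈ᵇ a :: j :: z := hz₂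
        _ ≈ᵇ a :: j :: i :: z₂ := (g₃.cons j).cons a
        _ ≈ᵇ a :: i :: j :: z₂ := (equivalent_swap hij.symm _).cons a
        _ ≈ᵇ i :: a :: j :: z₂ := equivalent_swap hia.symm _

theorem FactorsThroughLcm.swap {a i j : Fin m} {v : List (Fin m)} (hia : Distant i a)
    (ih : FactorsThroughLcmBelow m (t.length + 1))
    (h : FactorsThroughLcm a j (i :: t) v) : FactorsThroughLcm i j (a :: t) v := by
  rcases eq_or_adjacent_or_distant a j with rfl | haj | haj
  · exact (factorsThroughLcm_iff_of_distant hia).2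
      ⟨t, .refl, (factorsThroughLcm_self_iff.1 h).symm⟩
  · exact h.swap_of_adjacent hia haj ih
  · obtain ⟨z, hz₁, hz₂⟩ := (factorsThroughLcm_iff_of_distant haj).1 h
    exact ((ih (by simp) hz₁).cons_of_distant hia.symm haj).equivalent_right hz₂

theorem FactorsThroughLcm.braid_of_adjacent {a i j : Fin m} {v : List (Fin m)}
    (hia : Adjacent i a) (haj : Adjacent a j)
    (ih : FactorsThroughLcmBelow m (t.length + 2))
    (h : FactorsThroughLcm a j (i :: a :: t) v) : FactorsThroughLcm i j (a :: i :: t) v := by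
  obtain ⟨z, hz₁, hz₂⟩ := (factorsThroughLcm_iff_of_adjacent haj).1 h
  have ht : t.length = z.length := by simpa using hz₁.length_eq
  have h₁ := ih (by simp) hz₁
  have cancel : ∀ {k : Fin m} {u w : List (Fin m)}, u.length < t.length + 2 →
      k :: u ≈ᵇ k :: w → u ≈ᵇ w :=
    fun hu huw => factorsThroughLcm_self_iff.1 (ih hu huw)
  rcases eq_or_adjacent_or_distant i j with rfl | hij | hij
  · have g : t ≈ᵇ z := cancel (by omega) (factorsThroughLcm_self_iff.1 h₁)
    exact factorsThroughLcm_self_iff.2 (((g.cons i).cons a).trans hz₂.symm)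
  · unfold Adjacent at hia haj hij
    omega
  · obtain ⟨z₁, g₁, g₂⟩ := (factorsThroughLcm_iff_of_distant hij).1 h₁
    obtain ⟨z₂, g₃, g₄⟩ :=
      (factorsThroughLcm_iff_of_adjacent haj).1 (ih (by omega) g₁)
    have ht₂ : t.length = z₂.length + 1 + 1 := by simpa using g₃.length_eq
    obtain ⟨z₃, g₅, g₆⟩ :=
      (factorsThroughLcm_iff_of_adjacent hia.symm).1 (ih (by omega) (g₂.trans (g₄.cons i)))
    obtain ⟨z₄, g₇, g₈⟩ :=
      (factorsThroughLcm_iff_of_distant hij.symm).1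
        (ih (by omega) (cancel (by simp only [List.length_cons]; omega) g₆))
    refine (factorsThroughLcm_iff_of_distant hij).2 ⟨a :: i :: j :: a :: z₄, ?_, ?_⟩
    · calc a :: i :: t ≈ᵇ a :: i :: j :: a :: z₂ := (g₃.cons i).cons a
        _ ≈ᵇ a :: i :: j :: a :: i :: z₄ := (((g₇.cons a).cons j).cons i).cons a
        _ ≈ᵇ a :: j :: i :: a :: i :: z₄ := (equivalent_swap hij _).cons a
        _ ≈ᵇ a :: j :: a :: i :: a :: z₄ := ((equivalent_braid hia _).cons j).cons a
        _ ≈ᵇ j :: a :: j :: i :: a :: z₄ := equivalent_braid haj _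
        _ ≈ᵇ j :: a :: i :: j :: a :: z₄ := ((equivalent_swap hij.symm _).cons a).cons j
    · calc v ≈ᵇ a :: j :: z := hz₂
        _ ≈ᵇ a :: j :: i :: a :: z₃ := (g₅.cons j).cons a
        _ ≈ᵇ a :: j :: i :: a :: j :: z₄ := (((g₈.cons a).cons i).cons j).cons a
        _ ≈ᵇ a :: i :: j :: a :: j :: z₄ := (equivalent_swap hij.symm _).cons a
        _ ≈ᵇ a :: i :: a :: j :: a :: z₄ := ((equivalent_braid haj.symm _).cons i).cons a
        _ ≈ᵇ i :: a :: i :: j :: a :: z₄ := equivalent_braid hia.symm _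

theorem FactorsThroughLcm.braid_of_distant {a i j : Fin m} {v : List (Fin m)}
    (hia : Adjacent i a) (haj : Distant a j)
    (ih : FactorsThroughLcmBelow m (t.length + 2))
    (h : FactorsThroughLcm a j (i :: a :: t) v) : FactorsThroughLcm i j (a :: i :: t) v := by
  obtain ⟨z, hz₁, hz₂⟩ := (factorsThroughLcm_iff_of_distant haj).1 h
  have h₁ := ih (by simp) hz₁
  rcases eq_or_adjacent_or_distant i j with rfl | hij | hij
  · exact (haj.not_adjacent hia.symm).elim
  · obtain ⟨z₁, g₁, g₂⟩ := (factorsThroughLcm_iff_of_adjacent hij).1 h₁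
    obtain ⟨z₂, g₃, g₄⟩ :=
      (factorsThroughLcm_iff_of_distant haj).1 (ih (by simp) g₁)
    have ht₂ : t.length = z₂.length + 1 := by simpa using g₃.length_eq
    have hz₁ : z₁.length = z₂.length := by simpa using g₄.length_eq
    obtain ⟨z₃, g₅, g₆⟩ :=
      (factorsThroughLcm_iff_of_adjacent hia).1 (ih (by omega) g₄)
    refine (factorsThroughLcm_iff_of_adjacent hij).2 ⟨a :: i :: j :: z₃, ?_, ?_⟩
    · calc a :: i :: t ≈ᵇ a :: i :: j :: z₂ := (g₃.cons i).cons a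
        _ ≈ᵇ a :: i :: j :: i :: a :: z₃ := ((g₆.cons j).cons i).cons a
        _ ≈ᵇ a :: j :: i :: j :: a :: z₃ := (equivalent_braid hij _).cons a
        _ ≈ᵇ j :: a :: i :: j :: a :: z₃ := equivalent_swap haj _
        _ ≈ᵇ j :: a :: i :: a :: j :: z₃ :=
          (((equivalent_swap haj.symm _).cons i).cons a).cons j
        _ ≈ᵇ j :: i :: a :: i :: j :: z₃ := (equivalent_braid hia.symm _).cons j
    · calc v ≈ᵇ a :: z := hz₂
        _ ≈ᵇ a :: i :: j :: z₁ := g₂.cons a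
        _ ≈ᵇ a :: i :: j :: a :: i :: z₃ := ((g₅.cons j).cons i).cons a
        _ ≈ᵇ a :: i :: a :: j :: i :: z₃ := ((equivalent_swap haj.symm _).cons i).cons a
        _ ≈ᵇ i :: a :: i :: j :: i :: z₃ := equivalent_braid hia.symm _
        _ ≈ᵇ i :: a :: j :: i :: j :: z₃ := ((equivalent_braid hij _).cons a).cons i
        _ ≈ᵇ i :: j :: a :: i :: j :: z₃ := (equivalent_swap haj _).cons i
  · obtain ⟨z₁, g₁, g₂⟩ := (factorsThroughLcm_iff_of_distant hij).1 h₁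
    obtain ⟨z₂, g₃, g₄⟩ := (factorsThroughLcm_iff_of_distant haj).1 (ih (by simp) g₁)
    refine (factorsThroughLcm_iff_of_distant hij).2 ⟨a :: i :: z₂, ?_, ?_⟩
    · calc a :: i :: t ≈ᵇ a :: i :: j :: z₂ := (g₃.cons i).cons a
        _ ≈ᵇ a :: j :: i :: z₂ := (equivalent_swap hij _).cons a
        _ ≈ᵇ j :: a :: i :: z₂ := equivalent_swap haj _
    · calc v ≈ᵇ a :: z := hz₂
        _ ≈ᵇ a :: i :: z₁ := g₂.cons a
        _ ≈ᵇ a :: i :: a :: z₂ := (g₄.cons i).cons a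
        _ ≈ᵇ i :: a :: i :: z₂ := equivalent_braid hia.symm _

theorem FactorsThroughLcm.braid {a i j : Fin m} {v : List (Fin m)} (hia : Adjacent i a)
    (ih : FactorsThroughLcmBelow m (t.length + 2))
    (h : FactorsThroughLcm a j (i :: a :: t) v) : FactorsThroughLcm i j (a :: i :: t) v := by
  rcases eq_or_adjacent_or_distant a j with rfl | haj | haj
  · exact (factorsThroughLcm_iff_of_adjacent hia).2
      ⟨t, .refl, (factorsThroughLcm_self_iff.1 h).symm⟩
  · exact h.braid_of_adjacent hia haj ih
  · exact h.braid_of_distant hia haj ih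

end LengthInduction

theorem FactorsThroughLcmBelow.of_length_eq {N : ℕ} (ih : FactorsThroughLcmBelow m N)
    {i j : Fin m} {u v : List (Fin m)} (hu : u.length = N) (h : i :: u ≈ᵇ j :: v) :
    FactorsThroughLcm i j u v := by
  generalize hw : i :: u = w at h
  induction h using ReflTransGen.head_induction_on generalizing i u with
  | refl =>
    obtain ⟨rfl, rfl⟩ := List.cons.inj hw
    exact factorsThroughLcm_self_iff.2 .refl
  | head step _ ihc =>
    subst hw
    rcases rewriteStep_cons_cases step with
      ⟨u', hu', rfl⟩ | ⟨a, t, hia, rfl, rfl⟩ | ⟨a, t, hia, rfl, rfl⟩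
    · have hlen := (Equivalent.length_eq (.single hu')).symm
      exact (ihc (hlen.trans hu) rfl).equivalent_left (.single hu')
    · subst hu
      exact (ihc (by simp) rfl).swap hia ih
    · subst hu
      exact (ihc (by simp) rfl).braid hia ih

theorem factorsThroughLcmBelow (N : ℕ) : FactorsThroughLcmBelow m N := by
  induction N with
  | zero => exact fun _ _ _ _ hu => absurd hu (Nat.not_lt_zero _)
  | succ N ih =>
    intro i j u v hu h
    rcases Nat.lt_succ_iff_lt_or_eq.1 hu with hu | hu
    · exact ih hu h
    · exact ih.of_length_eq hu h

theorem factorsThroughLcm_of_equivalent {i j : Fin m} {u v : List (Fin m)}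
    (h : i :: u ≈ᵇ j :: v) : FactorsThroughLcm i j u v :=
  factorsThroughLcmBelow _ (Nat.lt_succ_self _) h

theorem Equivalent.cancel_cons {i : Fin m} {u v : List (Fin m)} (h : i :: u ≈ᵇ i :: v) :
    u ≈ᵇ v :=
  factorsThroughLcm_self_iff.1 (factorsThroughLcm_of_equivalent h)

theorem Equivalent.cancel_left {w u v : List (Fin m)} (h : w ++ u ≈ᵇ w ++ v) : u ≈ᵇ v := by
  induction w with
  | nil => exact h
  | cons x w ih => exact ih h.cancel_cons

theorem Equivalent.cancel_right {w u v : List (Fin m)} (h : u ++ w ≈ᵇ v ++ w) : u ≈ᵇ v := by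
  have h' : w.reverse ++ u.reverse ≈ᵇ w.reverse ++ v.reverse := by
    simpa only [List.reverse_append] using h.reverse
  simpa only [List.reverse_reverse] using h'.cancel_left.reverse

end BraidWord

open BraidWord in
instance (m : ℕ) : IsCancelMul (PresentedMonoid (braidMonoidRels m)) where
  mul_left_cancel a b c h := by
    induction a, b, c using PresentedMonoid.inductionOn₃
    beta_reduce at h
    rw [← map_mul, ← map_mul, PresentedMonoid.mk_eq_mk_iff_reflTransGen] at h
    exact PresentedMonoid.mk_eq_mk_iff_reflTransGen.2 (Equivalent.cancel_left h)
  mul_right_cancel a b c h := by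
    induction a, b, c using PresentedMonoid.inductionOn₃
    beta_reduce at h
    rw [← map_mul, ← map_mul, PresentedMonoid.mk_eq_mk_iff_reflTransGen] at h
    exact PresentedMonoid.mk_eq_mk_iff_reflTransGen.2 (Equivalent.cancel_right h)

/-- **Garside.** The positive braid monoid `Br_n⁺` is left and right cancellative: if
`A X B = A Y B` then `X = Y`; in particular `A X = A Y` implies `X = Y` and `X B = Y B`
implies `X = Y`. -/
theorem braid_monoid_cancellative (n : ℕ) :
    (∀ A B X Y : BraidMonoid n, A * X * B = A * Y * B → X = Y) ∧
    (∀ A X Y : BraidMonoid n, A * X = A * Y → X = Y) ∧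
    (∀ B X Y : BraidMonoid n, X * B = Y * B → X = Y) :=
  ⟨fun _ _ _ _ h => mul_left_cancel (mul_right_cancel h), fun _ _ _ => mul_left_cancel,
    fun _ _ _ => mul_right_cancel⟩
end

section
/- In the positive braid monoid Br_n^+, Garside's fundamental word Δ = (σ_1σ_2⋯σ_{n-1})(σ_1⋯σ_{n-2})⋯(σ_1σ_2)σ_1 satisfies σ_i Δ = Δ σ_{n-i} for every i = 1, …, n-1. -/
/-- The generator `σ_{i+1}` of `Br_n⁺` for a natural-number index (0-indexed), extended by
`1` outside the legal range. -/
def σp' {n : ℕ} (i : ℕ) : BraidMonoid n := if h : i < n - 1 then σp ⟨i, h⟩ else 1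

/-- The word `Π_t = σ_1 σ_2 ⋯ σ_t` in `Br_n⁺` (0-indexed: `σ_0 ⋯ σ_{t-1}`). -/
def garsidePi {n : ℕ} (t : ℕ) : BraidMonoid n :=
  ((List.range t).map fun k => σp' (n := n) k).prod

/-- Garside's fundamental word `Δ = Π_{n-1} Π_{n-2} ⋯ Π_1 ∈ Br_n⁺`, where
`Π_t = σ_1 σ_2 ⋯ σ_t`. -/
def garsideDelta (n : ℕ) : BraidMonoid n :=
  ((List.range (n - 1)).map fun k => garsidePi (n := n) (n - 1 - k)).prod

namespace GarsideAux

variable {n : ℕ}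

lemma sound {m : ℕ} {a b : FreeMonoid (Fin m)} (h : braidMonoidRels m a b) :
    PresentedMonoid.mk (braidMonoidRels m) a = PresentedMonoid.mk (braidMonoidRels m) b :=
  Quotient.sound (ConGen.Rel.of a b h)

lemma braid_comm (i j : Fin (n - 1)) (h : (i : ℕ) + 1 < j) :
    σp i * σp j = σp j * σp i :=
  sound (Or.inl ⟨i, j, h, rfl, rfl⟩)

lemma braid_rel (i j : Fin (n - 1)) (h : (i : ℕ) + 1 = j) :
    σp i * σp j * σp i = σp j * σp i * σp j :=
  sound (Or.inr ⟨i, j, h, rfl, rfl⟩)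

lemma comm' (i j : ℕ) (h : i + 1 < j) :
    σp' (n := n) i * σp' j = σp' j * σp' i := by
  unfold σp'
  split_ifs with h1 h2 h2
  · exact braid_comm ⟨i, h1⟩ ⟨j, h2⟩ h
  · simp
  · simp
  · simp

lemma braid' (i : ℕ) (h : i + 1 < n - 1) :
    σp' (n := n) i * σp' (i + 1) * σp' i = σp' (i + 1) * σp' i * σp' (i + 1) := by
  have hi : i < n - 1 := by omega
  unfold σp'
  rw [dif_pos hi, dif_pos h]
  exact braid_rel ⟨i, hi⟩ ⟨i + 1, h⟩ rfl

/-- `Ψ_t = σ_{t-1} ⋯ σ_1 σ_0`. -/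
def Psi (n t : ℕ) : BraidMonoid n := ((List.range t).map fun k => σp' (n := n) (t - 1 - k)).prod

/-- `D_t = Π_t Π_{t-1} ⋯ Π_1`. -/
def DD (n t : ℕ) : BraidMonoid n := ((List.range t).map fun k => garsidePi (n := n) (t - k)).prod

lemma Pi_succ (t : ℕ) : garsidePi (n := n) (t + 1) = garsidePi t * σp' t := by
  unfold garsidePi
  rw [List.range_succ, List.map_append, List.prod_append]
  simp

lemma Psi_succ (t : ℕ) : Psi n (t + 1) = σp' t * Psi n t := by
  unfold Psi
  rw [List.range_succ_eq_map, List.map_cons, List.prod_cons, List.map_map]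
  have h1 : ((fun k => σp' (n := n) (t + 1 - 1 - k)) ∘ (· + 1)) =
      fun k => σp' (n := n) (t - 1 - k) := by
    funext k; simp only [Function.comp]; congr 1; omega
  rw [h1]
  norm_num

lemma DD_succ (t : ℕ) : DD n (t + 1) = garsidePi (t + 1) * DD n t := by
  unfold DD
  rw [List.range_succ_eq_map, List.map_cons, List.prod_cons, List.map_map]
  have h1 : ((fun k => garsidePi (n := n) (t + 1 - k)) ∘ (· + 1)) =
      fun k => garsidePi (n := n) (t - k) := by
    funext k; simp only [Function.comp]; congr 1; omega
  rw [h1]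
  norm_num

lemma comm_Pi (j t : ℕ) (h : t + 1 ≤ j) :
    σp' (n := n) j * garsidePi t = garsidePi t * σp' j := by
  induction t with
  | zero => simp [garsidePi]
  | succ t ih =>
    rw [Pi_succ, ← mul_assoc, ih (by omega), mul_assoc, ← comm' t j (by omega), ← mul_assoc]

lemma comm_Psi (j t : ℕ) (h : t + 1 ≤ j) :
    σp' (n := n) j * Psi n t = Psi n t * σp' j := by
  induction t with
  | zero => simp [Psi]
  | succ t ih =>
    rw [Psi_succ, ← mul_assoc, ← comm' t j (by omega), mul_assoc, ih (by omega), ← mul_assoc]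

lemma comm_DD (j t : ℕ) (h : t + 1 ≤ j) :
    σp' (n := n) j * DD n t = DD n t * σp' j := by
  induction t with
  | zero => simp [DD]
  | succ t ih =>
    rw [DD_succ, ← mul_assoc, comm_Pi j (t + 1) (by omega), mul_assoc, ih (by omega), ← mul_assoc]

lemma slide (i t : ℕ) (hi : i + 1 < t) (ht : t ≤ n - 1) :
    σp' (n := n) (i + 1) * garsidePi t = garsidePi t * σp' i := by
  induction t with
  | zero => omega
  | succ t ih =>
    rcases Nat.lt_or_ge (i + 1) t with h | h
    · rw [Pi_succ, ← mul_assoc, ih h (by omega), mul_assoc, comm' i t (by omega), ← mul_assoc]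
    · have ht' : t = i + 1 := by omega
      subst ht'
      have hb := braid' (n := n) i (by omega)
      have hc := comm_Pi (n := n) (i + 1) i (by omega)
      calc σp' (n := n) (i + 1) * garsidePi (i + 1 + 1)
          = σp' (i + 1) * (garsidePi i * σp' i * σp' (i + 1)) := by
            rw [Pi_succ (i + 1), Pi_succ i]
        _ = (σp' (i + 1) * garsidePi i) * (σp' i * σp' (i + 1)) := by
            simp only [mul_assoc]
        _ = (garsidePi i * σp' (i + 1)) * (σp' i * σp' (i + 1)) := by rw [hc]
        _ = garsidePi i * (σp' (i + 1) * σp' i * σp' (i + 1)) := by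
            simp only [mul_assoc]
        _ = garsidePi i * (σp' i * σp' (i + 1) * σp' i) := by rw [← hb]
        _ = (garsidePi i * σp' i * σp' (i + 1)) * σp' i := by
            simp only [mul_assoc]
        _ = garsidePi (i + 1 + 1) * σp' i := by rw [Pi_succ (i + 1), Pi_succ i]

lemma psi_slide (t : ℕ) (h : t + 1 < n - 1) :
    σp' (n := n) t * Psi n (t + 2) = Psi n (t + 2) * σp' (t + 1) := by
  have hb := braid' (n := n) t h
  have hc := comm_Psi (n := n) (t + 1) t (by omega)
  have h2 : Psi n (t + 2) = σp' (t + 1) * (σp' t * Psi n t) := by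
    rw [Psi_succ (t + 1), Psi_succ t]
  calc σp' (n := n) t * Psi n (t + 2)
      = σp' t * σp' (t + 1) * σp' t * Psi n t := by
        rw [h2]; simp only [mul_assoc]
    _ = σp' (t + 1) * σp' t * σp' (t + 1) * Psi n t := by rw [hb]
    _ = σp' (t + 1) * σp' t * (σp' (t + 1) * Psi n t) := by simp only [mul_assoc]
    _ = σp' (t + 1) * σp' t * (Psi n t * σp' (t + 1)) := by rw [hc]
    _ = (σp' (t + 1) * (σp' t * Psi n t)) * σp' (t + 1) := by simp only [mul_assoc]
    _ = Psi n (t + 2) * σp' (t + 1) := by rw [← h2]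

lemma key (t : ℕ) (ht : t + 1 ≤ n - 1) :
    garsidePi (n := n) (t + 1) * DD n t = DD n t * Psi n (t + 1) := by
  induction t with
  | zero =>
    have hD : DD n 0 = 1 := rfl
    have hP : Psi n 1 = σp' 0 * Psi n 0 := Psi_succ 0
    have hP0 : Psi n 0 = 1 := rfl
    have hPi : garsidePi (n := n) 1 = garsidePi 0 * σp' 0 := Pi_succ 0
    have hPi0 : garsidePi (n := n) 0 = 1 := rfl
    simp [hD, hP, hP0, hPi, hPi0]
  | succ t ih =>
    have hkey := ih (by omega)
    have hc := comm_DD (n := n) (t + 1) t (by omega)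
    calc garsidePi (n := n) (t + 1 + 1) * DD n (t + 1)
        = garsidePi (t + 1) * (σp' (t + 1) * (garsidePi (t + 1) * DD n t)) := by
          rw [Pi_succ (t + 1), DD_succ t]; simp only [mul_assoc]
      _ = garsidePi (t + 1) * (σp' (t + 1) * (DD n t * Psi n (t + 1))) := by rw [hkey]
      _ = garsidePi (t + 1) * ((σp' (t + 1) * DD n t) * Psi n (t + 1)) := by
          simp only [mul_assoc]
      _ = garsidePi (t + 1) * ((DD n t * σp' (t + 1)) * Psi n (t + 1)) := by rw [hc]
      _ = (garsidePi (t + 1) * DD n t) * (σp' (t + 1) * Psi n (t + 1)) := by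
          simp only [mul_assoc]
      _ = DD n (t + 1) * Psi n (t + 1 + 1) := by rw [DD_succ t, Psi_succ (t + 1)]

lemma main : ∀ m, m ≤ n - 1 → ∀ i, i < m →
    σp' (n := n) i * DD n m = DD n m * σp' (m - 1 - i) := by
  intro m
  induction m with
  | zero => omega
  | succ m ih =>
    intro hm i hi
    rcases Nat.eq_zero_or_pos i with rfl | hipos
    · rcases Nat.eq_zero_or_pos m with rfl | hmpos
      · have hD : DD n 1 = σp' 0 := by
          rw [DD_succ 0, Pi_succ 0]
          show garsidePi 0 * σp' 0 * DD n 0 = σp' 0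
          rw [show garsidePi (n := n) 0 = 1 from rfl, show DD n 0 = 1 from rfl,
            one_mul, mul_one]
        rw [hD]
      · have hkey := key (n := n) m hm
        have hps : σp' (n := n) (m - 1) * Psi n (m + 1) = Psi n (m + 1) * σp' m := by
          have := psi_slide (n := n) (m - 1) (by omega)
          rwa [show m - 1 + 2 = m + 1 by omega, show m - 1 + 1 = m by omega] at this
        have h0 := ih (by omega) 0 hmpos
        rw [Nat.sub_zero] at h0
        calc σp' (n := n) 0 * DD n (m + 1)
            = σp' 0 * (DD n m * Psi n (m + 1)) := by rw [DD_succ m, hkey]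
          _ = (σp' 0 * DD n m) * Psi n (m + 1) := by rw [mul_assoc]
          _ = (DD n m * σp' (m - 1)) * Psi n (m + 1) := by rw [h0]
          _ = DD n m * (σp' (m - 1) * Psi n (m + 1)) := by rw [mul_assoc]
          _ = DD n m * (Psi n (m + 1) * σp' m) := by rw [hps]
          _ = (DD n m * Psi n (m + 1)) * σp' m := by rw [mul_assoc]
          _ = DD n (m + 1) * σp' m := by rw [← hkey, ← DD_succ m]
          _ = DD n (m + 1) * σp' (m + 1 - 1 - 0) := by norm_num
    · obtain ⟨k, rfl⟩ : ∃ k, i = k + 1 := ⟨i - 1, by omega⟩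
      have hidx : m + 1 - 1 - (k + 1) = m - 1 - k := by omega
      rw [hidx, DD_succ m, ← mul_assoc, slide k (m + 1) hi hm, mul_assoc,
        ih (by omega) k (by omega), ← mul_assoc]

lemma delta_eq : garsideDelta n = DD n (n - 1) := rfl

end GarsideAux

/-- **Garside.** In the positive braid monoid `Br_n⁺`, the fundamental word `Δ` satisfies
`σ_i Δ = Δ σ_{n-i}` for every `i = 1, …, n-1` (0-indexed: `σ_i Δ = Δ σ_{n-2-i}`). -/
theorem garside_delta_commutation (n : ℕ) :
    ∀ i : Fin (n - 1),
      σp i * garsideDelta n = garsideDelta n * σp ⟨n - 2 - i.1, by have := i.2; omega⟩ := by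
  intro i
  have hi := i.2
  have h := GarsideAux.main (n := n) (n - 1) le_rfl i.1 hi
  rw [GarsideAux.delta_eq]
  have e1 : σp' (n := n) i.1 = σp i := by
    rw [σp', dif_pos hi]
  have e2 : σp' (n := n) (n - 1 - 1 - i.1) = σp ⟨n - 2 - i.1, by omega⟩ := by
    rw [σp', dif_pos (show n - 1 - 1 - i.1 < n - 1 by omega)]
    exact congrArg σp (Fin.ext (by simp; omega))
  rw [e1, e2] at h
  exact h
end

section
/- (Garside normal form) Let ι : Br_n^+ → Br_n be the canonical homomorphism and let Δ = (σ_1⋯σ_{n-1})(σ_1⋯σ_{n-2})⋯σ_1 ∈ Br_n^+. Every element w of the braid group Br_n can be written as w = ι(Δ)^m ι(A) for a unique integer m and a unique element A ∈ Br_n^+ that is prime to Δ, i.e. such that there exist no U, V ∈ Br_n^+ with A = U Δ V. -/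
/-- An element `A` of `Br_n⁺` is prime to `Δ` if it cannot be written as `U Δ V` with
`U, V ∈ Br_n⁺`. -/
def PrimeToDelta {n : ℕ} (A : BraidMonoid n) : Prop :=
  ¬ ∃ U V : BraidMonoid n, A = U * garsideDelta n * V

/-!
Everything rests on Garside's theorem that the positive braid monoid is left cancellative, in the
sharper form: if `σ_a x = σ_b y` then `x = complement a b * z` and `y = complement b a * z` for some
`z`, where `σ_a * complement a b = σ_b * complement b a` is the least common multiple of `σ_a` and
`σ_b`. This is proved by induction on the length of `x`, following a chain of elementary braid moves
from `σ_a x` to `σ_b y`: a move at the front of the word is absorbed by a case analysis on the three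
generators involved, which uses the induction hypothesis up to four times.

Next, `Δ σ_i = σ_{n-i} Δ` and every `σ_i` left-divides `Δ`. Hence `Δ²` is central and every positive
braid divides a power of `Δ²` on either side, so the positive braid monoid satisfies Ore's condition,
embeds into its group of fractions, and `ι` is injective.

Existence: `Δ^{2k} w` is positive for some `k`, because `Δ² σ_i⁻¹` is positive and `Δ²` is central.
A positive braid `U Δ V = Δ U' V`, with `U'` as long as `U`, sheds a factor `Δ` and gets shorter, so
splitting off `Δ` repeatedly ends at a braid prime to `Δ`. Uniqueness: `ι(Δ)^k ι(A) = ι(B)` with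
`k > 0` would make `B = Δ^k A` divisible by `Δ`.
-/

open Relation

namespace BraidMonoid

section Words

variable {m : ℕ}

def Far (i j : Fin m) : Prop := (i : ℕ) + 1 < j ∨ (j : ℕ) + 1 < i

def Adj (i j : Fin m) : Prop := (i : ℕ) + 1 = j ∨ (j : ℕ) + 1 = i

instance : DecidableRel (Far (m := m)) := fun _ _ => inferInstanceAs (Decidable (_ ∨ _))

theorem Far.symm {i j : Fin m} (h : Far i j) : Far j i := Or.symm h

theorem Adj.symm {i j : Fin m} (h : Adj i j) : Adj j i := Or.symm h

theorem Far.ne {i j : Fin m} (h : Far i j) : i ≠ j := by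
  rintro rfl; unfold Far at h; omega

theorem Adj.ne {i j : Fin m} (h : Adj i j) : i ≠ j := by
  rintro rfl; unfold Adj at h; omega

theorem Adj.not_far {i j : Fin m} (h : Adj i j) : ¬ Far i j := by
  unfold Adj Far at *; omega

theorem eq_or_far_or_adj (i j : Fin m) : i = j ∨ Far i j ∨ Adj i j := by
  unfold Far Adj; omega

theorem not_adj_triangle {i j k : Fin m} (hij : Adj i j) (hjk : Adj j k) (hki : Adj k i) :
    False := by
  unfold Adj at *; omega

inductive Step : List (Fin m) → List (Fin m) → Prop
  | swap {i j : Fin m} (h : Far i j) (t : List (Fin m)) : Step (i :: j :: t) (j :: i :: t)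
  | braid {i j : Fin m} (h : Adj i j) (t : List (Fin m)) :
      Step (i :: j :: i :: t) (j :: i :: j :: t)
  | cons (a : Fin m) {u v : List (Fin m)} : Step u v → Step (a :: u) (a :: v)

theorem Step.symm {u v : List (Fin m)} (h : Step u v) : Step v u := by
  induction h with
  | swap h t => exact .swap h.symm t
  | braid h t => exact .braid h.symm t
  | cons a _ ih => exact .cons a ih

theorem Step.append_left {u v : List (Fin m)} (h : Step u v) (s : List (Fin m)) :
    Step (s ++ u) (s ++ v) := by
  induction s with
  | nil => exact h
  | cons a s ih => exact .cons a ih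

theorem Step.append_right {u v : List (Fin m)} (h : Step u v) (t : List (Fin m)) :
    Step (u ++ t) (v ++ t) := by
  induction h with
  | swap h s => exact .swap h (s ++ t)
  | braid h s => exact .braid h (s ++ t)
  | cons a _ ih => exact .cons a ih

theorem reflTransGen_step_symm {u v : List (Fin m)} (h : ReflTransGen Step u v) :
    ReflTransGen Step v u := by
  induction h with
  | refl => rfl
  | tail _ hs ih => exact ih.head hs.symm

theorem reflTransGen_step_append {u v u' v' : List (Fin m)} (h : ReflTransGen Step u v)
    (h' : ReflTransGen Step u' v') : ReflTransGen Step (u ++ u') (v ++ v') :=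
  (h.lift (· ++ u') fun _ _ hs => hs.append_right u').trans
    (h'.lift (v ++ ·) fun _ _ hs => hs.append_left v)

theorem reflTransGen_step_of_conGen {x y : FreeMonoid (Fin m)}
    (h : conGen (braidMonoidRels m) x y) : ReflTransGen Step x.toList y.toList := by
  induction h with
  | of x y h =>
    obtain ⟨i, j, hij, rfl, rfl⟩ | ⟨i, j, hij, rfl, rfl⟩ := h
    · exact .single (.swap (.inl hij) [])
    · exact .single (.braid (.inl hij) [])
  | refl => rfl
  | symm _ ih => exact reflTransGen_step_symm ih
  | trans _ _ ih ih' => exact ih.trans ih'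
  | mul _ _ ih ih' => simpa only [FreeMonoid.toList_mul] using reflTransGen_step_append ih ih'

end Words

variable {n : ℕ}

theorem commute_σp {i j : Fin (n - 1)} (h : Far i j) : Commute (σp i) (σp j) := by
  rcases h with h | h
  · exact PresentedMonoid.mk_eq_mk_of_rel (.inl ⟨i, j, h, rfl, rfl⟩)
  · exact (PresentedMonoid.mk_eq_mk_of_rel (.inl ⟨j, i, h, rfl, rfl⟩)).symm

theorem σp_braid {i j : Fin (n - 1)} (h : Adj i j) :
    σp i * σp j * σp i = σp j * σp i * σp j := by
  rcases h with h | h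
  · exact PresentedMonoid.mk_eq_mk_of_rel (.inr ⟨i, j, h, rfl, rfl⟩)
  · exact (PresentedMonoid.mk_eq_mk_of_rel (.inr ⟨j, i, h, rfl, rfl⟩)).symm

theorem σp_braid_assoc {i j : Fin (n - 1)} (h : Adj i j) (x : BraidMonoid n) :
    σp i * (σp j * (σp i * x)) = σp j * (σp i * (σp j * x)) := by
  simp only [← mul_assoc, σp_braid h]

def ofWord (u : List (Fin (n - 1))) : BraidMonoid n :=
  PresentedMonoid.mk _ (FreeMonoid.ofList u)

theorem ofWord_cons (a : Fin (n - 1)) (u : List (Fin (n - 1))) :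
    ofWord (a :: u) = σp a * ofWord u :=
  map_mul (PresentedMonoid.mk _) (FreeMonoid.of a) (FreeMonoid.ofList u)

theorem ofWord_surjective : Function.Surjective (ofWord (n := n)) := fun x =>
  PresentedMonoid.inductionOn x fun a => ⟨a.toList, rfl⟩

@[elab_as_elim]
theorem induction_on {p : BraidMonoid n → Prop} (x : BraidMonoid n) (one : p 1)
    (σp_mul : ∀ a x, p x → p (σp a * x)) : p x := by
  obtain ⟨u, rfl⟩ := ofWord_surjective x
  induction u with
  | nil => exact one
  | cons a u ih => rw [ofWord_cons]; exact σp_mul a _ ih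

theorem ofWord_eq_of_step {u v : List (Fin (n - 1))} (h : Step u v) : ofWord u = ofWord v := by
  induction h with
  | swap h t => simp only [ofWord_cons, (commute_σp h).left_comm]
  | braid h t => simp only [ofWord_cons, σp_braid_assoc h]
  | cons a _ ih => rw [ofWord_cons, ofWord_cons, ih]

theorem ofWord_eq_ofWord_iff {u v : List (Fin (n - 1))} :
    ofWord u = ofWord v ↔ ReflTransGen Step u v := by
  refine ⟨fun h => reflTransGen_step_of_conGen (PresentedMonoid.mk_eq_mk_iff.1 h), fun h => ?_⟩
  induction h with
  | refl => rfl
  | tail _ hs ih => exact ih.trans (ofWord_eq_of_step hs)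

def lengthHom : BraidMonoid n →* Multiplicative ℕ :=
  PresentedMonoid.lift (fun _ => Multiplicative.ofAdd 1) <| by
    rintro _ _ (⟨i, j, _, rfl, rfl⟩ | ⟨i, j, _, rfl, rfl⟩) <;>
      simp only [map_mul, FreeMonoid.lift_eval_of]

def length (x : BraidMonoid n) : ℕ := (lengthHom x).toAdd

theorem length_mul (x y : BraidMonoid n) : length (x * y) = length x + length y :=
  congrArg Multiplicative.toAdd (map_mul lengthHom x y)

theorem length_σp_mul (a : Fin (n - 1)) (x : BraidMonoid n) :
    length (σp a * x) = length x + 1 := by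
  rw [length_mul, add_comm]; rfl

def complement (a b : Fin (n - 1)) : BraidMonoid n :=
  if a = b then 1 else if Far a b then σp b else σp b * σp a

@[simp] theorem complement_self (a : Fin (n - 1)) : complement (n := n) a a = 1 := if_pos rfl

theorem complement_of_far {a b : Fin (n - 1)} (h : Far a b) : complement (n := n) a b = σp b := by
  rw [complement, if_neg h.ne, if_pos h]

theorem complement_of_adj {a b : Fin (n - 1)} (h : Adj a b) :
    complement (n := n) a b = σp b * σp a := by
  rw [complement, if_neg h.ne, if_neg h.not_far]

def FactorsThroughLcm (a : Fin (n - 1)) (x : BraidMonoid n) (b : Fin (n - 1))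
    (y : BraidMonoid n) : Prop :=
  ∃ z, x = complement a b * z ∧ y = complement b a * z

def FactorsThroughLcmBelow (n L : ℕ) : Prop :=
  ∀ ⦃a b : Fin (n - 1)⦄ ⦃x y : BraidMonoid n⦄,
    length x < L → σp a * x = σp b * y → FactorsThroughLcm a x b y

theorem length_eq_of_σp_mul_eq {a b : Fin (n - 1)} {x y : BraidMonoid n}
    (h : σp a * x = σp b * y) : length x = length y := by
  simpa only [length_σp_mul, add_left_inj] using congrArg length h

section Completion

variable {N : ℕ} {a b c : Fin (n - 1)} {x y : BraidMonoid n}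

theorem factorsThroughLcm_self_iff : FactorsThroughLcm a x a y ↔ x = y := by
  simp [FactorsThroughLcm, eq_comm]

theorem factorsThroughLcm_iff_of_far (h : Far a b) :
    FactorsThroughLcm a x b y ↔ ∃ z, x = σp b * z ∧ y = σp a * z := by
  rw [FactorsThroughLcm, complement_of_far h, complement_of_far h.symm]

theorem factorsThroughLcm_iff_of_adj (h : Adj a b) :
    FactorsThroughLcm a x b y ↔ ∃ z, x = σp b * (σp a * z) ∧ y = σp a * (σp b * z) := by
  simp only [FactorsThroughLcm, complement_of_adj h, complement_of_adj h.symm, mul_assoc]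

theorem factorsThroughLcm_swap_of_adj (IH : FactorsThroughLcmBelow n N) (hx : length x < N)
    (hac : Far a c) (hcb : Adj c b) {z₁ : BraidMonoid n} (h : σp a * x = σp b * (σp c * z₁)) :
    FactorsThroughLcm a (σp c * x) b (σp c * (σp b * z₁)) := by
  have hz₁ := length_eq_of_σp_mul_eq h
  rcases eq_or_far_or_adj a b with rfl | hab | hab
  · exact absurd hac hcb.symm.not_far
  · obtain ⟨z₂, rfl, h₂⟩ := (factorsThroughLcm_iff_of_far hab).1 (IH hx h)
    obtain ⟨z₃, rfl, rfl⟩ := (factorsThroughLcm_iff_of_far hac.symm).1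
      (IH (by simp only [length_σp_mul] at hx hz₁; omega) h₂)
    refine (factorsThroughLcm_iff_of_far hab).2 ⟨σp c * (σp b * z₃), σp_braid_assoc hcb _, ?_⟩
    rw [(commute_σp hab.symm).left_comm, (commute_σp hac.symm).left_comm]
  · obtain ⟨z₂, rfl, h₂⟩ := (factorsThroughLcm_iff_of_adj hab).1 (IH hx h)
    obtain ⟨z₃, rfl, h₃⟩ := (factorsThroughLcm_iff_of_far hac.symm).1
      (IH (by simp only [length_σp_mul] at hx hz₁; omega) h₂)
    obtain ⟨z₄, rfl, rfl⟩ := (factorsThroughLcm_iff_of_adj hcb.symm).1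
      (IH (by simp only [length_σp_mul] at hx; omega) h₃)
    refine (factorsThroughLcm_iff_of_adj hab).2 ⟨σp c * (σp b * (σp a * z₄)), ?_, ?_⟩
    · rw [(commute_σp hac).left_comm (σp b * z₄), σp_braid_assoc hcb, σp_braid_assoc hab.symm,
        (commute_σp hac.symm).left_comm]
    · rw [σp_braid_assoc hab.symm, (commute_σp hac.symm).left_comm,
        (commute_σp hac).left_comm z₄, σp_braid_assoc hcb]

theorem FactorsThroughLcm.swap (IH : FactorsThroughLcmBelow n N) (hx : length x < N)
    (hac : Far a c) (h : FactorsThroughLcm c (σp a * x) b y) :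
    FactorsThroughLcm a (σp c * x) b y := by
  rcases eq_or_far_or_adj c b with rfl | hcb | hcb
  · rw [factorsThroughLcm_self_iff] at h
    exact (factorsThroughLcm_iff_of_far hac).2 ⟨x, rfl, h.symm⟩
  · obtain ⟨z₁, h₁, rfl⟩ := (factorsThroughLcm_iff_of_far hcb).1 h
    rcases eq_or_far_or_adj a b with rfl | hab | hab
    · obtain rfl := factorsThroughLcm_self_iff.1 (IH hx h₁)
      exact factorsThroughLcm_self_iff.2 rfl
    · obtain ⟨z₂, rfl, rfl⟩ := (factorsThroughLcm_iff_of_far hab).1 (IH hx h₁)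
      exact (factorsThroughLcm_iff_of_far hab).2
        ⟨σp c * z₂, (commute_σp hcb).left_comm _, ((commute_σp hac).left_comm _).symm⟩
    · obtain ⟨z₂, rfl, rfl⟩ := (factorsThroughLcm_iff_of_adj hab).1 (IH hx h₁)
      refine (factorsThroughLcm_iff_of_adj hab).2 ⟨σp c * z₂, ?_, ?_⟩
      · rw [(commute_σp hcb).left_comm, (commute_σp hac.symm).left_comm]
      · rw [(commute_σp hac.symm).left_comm, (commute_σp hcb).left_comm]
  · obtain ⟨z₁, h₁, rfl⟩ := (factorsThroughLcm_iff_of_adj hcb).1 h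
    exact factorsThroughLcm_swap_of_adj IH hx hac hcb h₁

theorem factorsThroughLcm_braid_of_far (IH : FactorsThroughLcmBelow n N) (hx : length x + 1 < N)
    (hac : Adj a c) (hcb : Far c b) {z₁ : BraidMonoid n} (h : σp a * (σp c * x) = σp b * z₁) :
    FactorsThroughLcm a (σp c * (σp a * x)) b (σp c * z₁) := by
  have hcx : length (σp c * x) < N := by rwa [length_σp_mul]
  rcases eq_or_far_or_adj a b with rfl | hab | hab
  · exact absurd hcb hac.symm.not_far
  · obtain ⟨z₂, h₂, rfl⟩ := (factorsThroughLcm_iff_of_far hab).1 (IH hcx h)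
    obtain ⟨z₃, rfl, rfl⟩ := (factorsThroughLcm_iff_of_far hcb).1 (IH (by omega) h₂)
    refine (factorsThroughLcm_iff_of_far hab).2 ⟨σp c * (σp a * z₃), ?_, σp_braid_assoc hac.symm _⟩
    rw [(commute_σp hab).left_comm, (commute_σp hcb).left_comm]
  · obtain ⟨z₂, h₂, rfl⟩ := (factorsThroughLcm_iff_of_adj hab).1 (IH hcx h)
    obtain ⟨z₃, rfl, h₃⟩ := (factorsThroughLcm_iff_of_far hcb).1 (IH (by omega) h₂)
    obtain ⟨z₄, rfl, rfl⟩ := (factorsThroughLcm_iff_of_adj hac).1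
      (IH (by have := length_eq_of_σp_mul_eq h₃; simp only [length_σp_mul] at hx; omega) h₃)
    refine (factorsThroughLcm_iff_of_adj hab).2 ⟨σp c * (σp a * (σp b * z₄)), ?_, ?_⟩
    · rw [σp_braid_assoc hab, (commute_σp hcb).left_comm, (commute_σp hcb.symm).left_comm z₄,
        σp_braid_assoc hac.symm]
    · rw [(commute_σp hcb.symm).left_comm (σp a * z₄), σp_braid_assoc hac.symm, σp_braid_assoc hab,
        (commute_σp hcb).left_comm]

theorem factorsThroughLcm_braid_of_adj (IH : FactorsThroughLcmBelow n N) (hx : length x + 1 < N)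
    (hac : Adj a c) (hcb : Adj c b) {z₁ : BraidMonoid n}
    (h : σp a * (σp c * x) = σp b * (σp c * z₁)) :
    FactorsThroughLcm a (σp c * (σp a * x)) b (σp c * (σp b * z₁)) := by
  have hz₁ := length_eq_of_σp_mul_eq h
  simp only [length_σp_mul] at hz₁
  have hcx : length (σp c * x) < N := by rwa [length_σp_mul]
  rcases eq_or_far_or_adj a b with rfl | hab | hab
  · have h₂ := factorsThroughLcm_self_iff.1 (IH hcx h)
    obtain rfl := factorsThroughLcm_self_iff.1 (IH (by omega) h₂)
    exact factorsThroughLcm_self_iff.2 rfl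
  · obtain ⟨z₂, h₂, h₂'⟩ := (factorsThroughLcm_iff_of_far hab).1 (IH hcx h)
    obtain ⟨z₃, rfl, rfl⟩ := (factorsThroughLcm_iff_of_adj hcb).1 (IH (by omega) h₂)
    obtain ⟨z₄, rfl, h₄⟩ := (factorsThroughLcm_iff_of_adj hac.symm).1 (IH (by omega) h₂')
    simp only [length_σp_mul] at hx
    have h₅ := factorsThroughLcm_self_iff.1 (IH (by simp only [length_σp_mul]; omega) h₄)
    obtain ⟨z₅, rfl, rfl⟩ := (factorsThroughLcm_iff_of_far hab.symm).1 (IH (by omega) h₅)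
    refine (factorsThroughLcm_iff_of_far hab).2 ⟨σp c * (σp b * (σp a * (σp c * z₅))), ?_, ?_⟩
    · rw [(commute_σp hab).left_comm, σp_braid_assoc hac, σp_braid_assoc hcb]
    · rw [(commute_σp hab.symm).left_comm (σp c * (σp b * z₅)), σp_braid_assoc hcb.symm,
        σp_braid_assoc hac.symm, (commute_σp hab).left_comm]
  · exact (not_adj_triangle hac hcb hab.symm).elim

theorem FactorsThroughLcm.braid (IH : FactorsThroughLcmBelow n N) (hx : length x + 1 < N)
    (hac : Adj a c) (h : FactorsThroughLcm c (σp a * (σp c * x)) b y) :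
    FactorsThroughLcm a (σp c * (σp a * x)) b y := by
  rcases eq_or_far_or_adj c b with rfl | hcb | hcb
  · rw [factorsThroughLcm_self_iff] at h
    exact (factorsThroughLcm_iff_of_adj hac).2 ⟨x, rfl, h.symm⟩
  · obtain ⟨z₁, h₁, rfl⟩ := (factorsThroughLcm_iff_of_far hcb).1 h
    exact factorsThroughLcm_braid_of_far IH hx hac hcb h₁
  · obtain ⟨z₁, h₁, rfl⟩ := (factorsThroughLcm_iff_of_adj hcb).1 h
    exact factorsThroughLcm_braid_of_adj IH hx hac hcb h₁

end Completion

theorem factorsThroughLcm_of_reflTransGen {L : ℕ} (IH : FactorsThroughLcmBelow n L)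
    {U : List (Fin (n - 1))} {b : Fin (n - 1)} {Y : List (Fin (n - 1))}
    (h : ReflTransGen Step U (b :: Y)) :
    ∀ a X, U = a :: X → length (ofWord X) ≤ L →
      FactorsThroughLcm a (ofWord X) b (ofWord (n := n) Y) := by
  induction h using Relation.ReflTransGen.head_induction_on with
  | refl =>
    rintro a X ⟨⟩ -
    exact factorsThroughLcm_self_iff.2 rfl
  | head hs _ ih =>
    rintro a X rfl hX
    cases hs with
    | swap hac t =>
      have h' := ih _ (a :: t) rfl (by simpa only [ofWord_cons, length_σp_mul] using hX)
      simp only [ofWord_cons, length_σp_mul] at hX h' ⊢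
      exact h'.swap IH (by omega) hac
    | braid hac t =>
      have h' := ih _ (a :: _ :: t) rfl (by simpa only [ofWord_cons, length_σp_mul] using hX)
      simp only [ofWord_cons, length_σp_mul] at hX h' ⊢
      exact h'.braid IH (by omega) hac
    | cons _ hs =>
      rw [ofWord_eq_of_step hs] at hX ⊢
      exact ih a _ rfl hX

theorem factorsThroughLcmBelow_succ {L : ℕ} (IH : FactorsThroughLcmBelow n L) :
    FactorsThroughLcmBelow n (L + 1) := by
  intro a b x y hx h
  obtain ⟨X, rfl⟩ := ofWord_surjective x
  obtain ⟨Y, rfl⟩ := ofWord_surjective y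
  rw [← ofWord_cons, ← ofWord_cons, ofWord_eq_ofWord_iff] at h
  exact factorsThroughLcm_of_reflTransGen IH h a X rfl (Nat.lt_succ_iff.1 hx)

theorem factorsThroughLcm_of_σp_mul_eq {a b : Fin (n - 1)} {x y : BraidMonoid n}
    (h : σp a * x = σp b * y) : FactorsThroughLcm a x b y := by
  have hbelow : ∀ L, FactorsThroughLcmBelow n L :=
    Nat.rec (fun _ _ _ _ hx => absurd hx (Nat.not_lt_zero _)) fun _ => factorsThroughLcmBelow_succ
  exact hbelow _ (Nat.lt_succ_self _) h

instance : IsLeftCancelMul (BraidMonoid n) where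
  mul_left_cancel u x y h := by
    induction u using induction_on with
    | one => simpa using h
    | σp_mul a u ih =>
      simp only [mul_assoc] at h
      exact ih (factorsThroughLcm_self_iff.1 (factorsThroughLcm_of_σp_mul_eq h))

section Garside

theorem σp'_of_lt {i : ℕ} (h : i < n - 1) : σp' (n := n) i = σp ⟨i, h⟩ := dif_pos h

theorem commute_σp' {i j : ℕ} (h : i + 2 ≤ j) : Commute (σp' (n := n) i) (σp' j) := by
  unfold σp'
  split_ifs
  · exact commute_σp (.inl (by simp only; omega))
  all_goals simp

theorem σp'_braid {i : ℕ} (h : i + 1 < n - 1) :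
    σp' (n := n) i * σp' (i + 1) * σp' i = σp' (i + 1) * σp' i * σp' (i + 1) := by
  rw [σp'_of_lt (by omega : i < n - 1), σp'_of_lt h]
  exact σp_braid (.inl rfl)

theorem garsidePi_zero : garsidePi (n := n) 0 = 1 := rfl

theorem garsidePi_succ (t : ℕ) : garsidePi (n := n) (t + 1) = garsidePi t * σp' t := by
  simp [garsidePi, List.range_succ]

theorem commute_σp'_garsidePi {s j : ℕ} (h : s < j) : Commute (σp' (n := n) j) (garsidePi s) :=
  Commute.list_prod_right _ _ <| by
    simp only [List.mem_map, List.mem_range]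
    rintro _ ⟨k, hk, rfl⟩
    exact (commute_σp' (by omega)).symm

theorem σp'_zero_dvd_garsidePi (t : ℕ) : σp' (n := n) 0 ∣ garsidePi (t + 1) := by
  induction t with
  | zero => simp [garsidePi_succ, garsidePi_zero]
  | succ t ih => rw [garsidePi_succ]; exact ih.mul_right _

theorem garsidePi_mul_σp' {t i : ℕ} (hi : i + 2 ≤ t) (ht : t ≤ n - 1) :
    garsidePi (n := n) t * σp' i = σp' (i + 1) * garsidePi t := by
  induction t, hi using Nat.le_induction with
  | base =>
    rw [garsidePi_succ, garsidePi_succ, mul_assoc, mul_assoc, ← mul_assoc _ _ (σp' i),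
      σp'_braid (by omega), ← mul_assoc, ← mul_assoc, ← (commute_σp'_garsidePi (lt_add_one i)).eq]
    simp only [mul_assoc]
  | succ t hit ih =>
    rw [garsidePi_succ, mul_assoc, ← (commute_σp' hit).eq, ← mul_assoc, ih (by omega), mul_assoc]

theorem garsidePi_mul_self {s : ℕ} (hs : s + 1 ≤ n - 1) :
    garsidePi (n := n) (s + 1) * garsidePi (s + 1) = σp' 0 * (garsidePi (s + 1) * garsidePi s) := by
  induction s with
  | zero => simp [garsidePi_succ, garsidePi_zero]
  | succ s ih =>
    have hcomm := commute_σp'_garsidePi (n := n) (lt_add_one s)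
    calc garsidePi (s + 2) * garsidePi (s + 2)
        = garsidePi (s + 1) * (σp' (s + 1) * garsidePi s) * (σp' s * σp' (s + 1)) := by
          rw [garsidePi_succ (s + 1), garsidePi_succ s]; simp only [mul_assoc]
      _ = garsidePi (s + 1) * garsidePi s * (σp' (s + 1) * σp' s * σp' (s + 1)) := by
          rw [hcomm.eq]; simp only [mul_assoc]
      _ = garsidePi (s + 1) * garsidePi (s + 1) * (σp' (s + 1) * σp' s) := by
          rw [← σp'_braid (by omega), garsidePi_succ s]; simp only [mul_assoc]
      _ = σp' 0 * (garsidePi (s + 1) * σp' (s + 1) * (garsidePi s * σp' s)) := by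
          rw [ih (by omega)]; simp only [mul_assoc, hcomm.left_comm]
      _ = σp' 0 * (garsidePi (s + 2) * garsidePi (s + 1)) := by
          rw [← garsidePi_succ, ← garsidePi_succ]

def partialDelta (n t : ℕ) : BraidMonoid n :=
  ((List.range t).map fun k => garsidePi (n := n) (t - k)).prod

theorem partialDelta_zero : partialDelta n 0 = 1 := rfl

theorem partialDelta_succ (t : ℕ) :
    partialDelta n (t + 1) = garsidePi (t + 1) * partialDelta n t := by
  simp [partialDelta, List.range_succ_eq_map, Function.comp_def]

theorem commute_σp'_partialDelta {s j : ℕ} (h : s < j) :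
    Commute (σp' (n := n) j) (partialDelta n s) := by
  induction s with
  | zero => exact Commute.one_right _
  | succ s ih =>
    rw [partialDelta_succ]
    exact (commute_σp'_garsidePi h).mul_right (ih (by omega))

theorem partialDelta_succ_mul_σp'_self {t : ℕ} (ht : t + 1 ≤ n - 1) :
    partialDelta n (t + 1) * σp' t = σp' 0 * partialDelta n (t + 1) := by
  cases t with
  | zero => simp [partialDelta_succ, partialDelta_zero, garsidePi_succ, garsidePi_zero]
  | succ s =>
    calc partialDelta n (s + 2) * σp' (s + 1)
        = garsidePi (s + 2) * (garsidePi (s + 1) * σp' (s + 1)) * partialDelta n s := by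
          rw [partialDelta_succ, partialDelta_succ, mul_assoc, mul_assoc,
            ← (commute_σp'_partialDelta (lt_add_one s)).eq]
          simp only [mul_assoc]
      _ = σp' 0 * partialDelta n (s + 2) := by
          rw [← garsidePi_succ, garsidePi_mul_self ht, partialDelta_succ, partialDelta_succ]
          simp only [mul_assoc]

theorem partialDelta_mul_σp' {t i : ℕ} (hi : i < t) (ht : t ≤ n - 1) :
    partialDelta n t * σp' i = σp' (t - 1 - i) * partialDelta n t := by
  induction t with
  | zero => omega
  | succ t ih =>
    rcases Nat.lt_succ_iff_lt_or_eq.1 hi with hi | rfl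
    · rw [partialDelta_succ, mul_assoc, ih hi (by omega), ← mul_assoc,
        garsidePi_mul_σp' (by omega) ht, mul_assoc, show t - 1 - i + 1 = t + 1 - 1 - i by omega]
    · rw [partialDelta_succ_mul_σp'_self ht, Nat.add_sub_cancel, Nat.sub_self]

theorem σp'_dvd_partialDelta {t i : ℕ} (hi : i < t) (ht : t ≤ n - 1) :
    σp' i ∣ partialDelta n t := by
  induction t generalizing i with
  | zero => omega
  | succ t ih =>
    rw [partialDelta_succ]
    rcases i with _ | i
    · exact (σp'_zero_dvd_garsidePi t).mul_right _
    · obtain ⟨D, hD⟩ := ih (by omega : i < t) (by omega)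
      exact ⟨garsidePi (t + 1) * D, by
        rw [hD, ← mul_assoc, garsidePi_mul_σp' (by omega) ht, mul_assoc]⟩

theorem σp_mul_garsideDelta (a : Fin (n - 1)) :
    σp a * garsideDelta n = garsideDelta n * σp a.rev := by
  have h := partialDelta_mul_σp' (n := n) a.rev.isLt le_rfl
  rw [show n - 1 - 1 - (a.rev : ℕ) = a by simp only [Fin.val_rev]; omega,
    σp'_of_lt a.isLt, σp'_of_lt a.rev.isLt] at h
  exact h.symm

theorem σp_dvd_garsideDelta (a : Fin (n - 1)) : σp a ∣ garsideDelta n := by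
  have h := σp'_dvd_partialDelta (n := n) a.isLt le_rfl
  rwa [σp'_of_lt a.isLt] at h

end Garside

theorem length_garsideDelta_pos (hn : 2 ≤ n) : 0 < length (garsideDelta n) := by
  obtain ⟨D, hD⟩ := σp_dvd_garsideDelta (n := n) ⟨0, by omega⟩
  rw [hD, length_σp_mul]
  exact Nat.succ_pos _

theorem exists_mul_garsideDelta_eq (x : BraidMonoid n) :
    ∃ x', x * garsideDelta n = garsideDelta n * x' ∧ length x' = length x := by
  induction x using induction_on with
  | one => exact ⟨1, by simp, rfl⟩
  | σp_mul a x ih =>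
    obtain ⟨x', hx', hl⟩ := ih
    exact ⟨σp a.rev * x', by rw [mul_assoc, hx', ← mul_assoc, σp_mul_garsideDelta, mul_assoc],
      by rw [length_σp_mul, length_σp_mul, hl]⟩

theorem commute_garsideDelta_sq (x : BraidMonoid n) : Commute (garsideDelta n ^ 2) x := by
  induction x using induction_on with
  | one => exact Commute.one_right _
  | σp_mul a x ih =>
    refine Commute.mul_right ?_ ih
    have h := σp_mul_garsideDelta a.rev
    rw [Fin.rev_rev] at h
    rw [Commute, SemiconjBy, sq, mul_assoc, ← h, ← mul_assoc, ← σp_mul_garsideDelta, mul_assoc]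

theorem exists_σp_mul_eq_garsideDelta_sq (a : Fin (n - 1)) :
    ∃ c, σp a * c = garsideDelta n ^ 2 ∧ c * σp a = garsideDelta n ^ 2 := by
  obtain ⟨D, hD⟩ := σp_dvd_garsideDelta a
  have hc : σp a * (D * garsideDelta n) = garsideDelta n ^ 2 := by rw [← mul_assoc, ← hD, sq]
  refine ⟨D * garsideDelta n, hc, mul_left_cancel (a := σp a) ?_⟩
  rw [← mul_assoc, hc, (commute_garsideDelta_sq _).eq]

theorem dvd_garsideDelta_sq_pow (x : BraidMonoid n) : ∃ k, x ∣ (garsideDelta n ^ 2) ^ k := by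
  induction x using induction_on with
  | one => exact ⟨0, one_dvd _⟩
  | σp_mul a x ih =>
    obtain ⟨k, c, hc⟩ := ih
    obtain ⟨d, hd, -⟩ := exists_σp_mul_eq_garsideDelta_sq a
    refine ⟨k + 1, c * d, ?_⟩
    calc (garsideDelta n ^ 2) ^ (k + 1) = (garsideDelta n ^ 2) ^ k * (σp a * d) := by
          rw [pow_succ, hd]
      _ = σp a * x * (c * d) := by
          rw [← mul_assoc, ((commute_garsideDelta_sq (σp a)).pow_left k).eq, hc]
          simp only [mul_assoc]

theorem exists_mul_eq_garsideDelta_sq_pow (x : BraidMonoid n) :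
    ∃ k c, c * x = (garsideDelta n ^ 2) ^ k := by
  induction x using induction_on with
  | one => exact ⟨0, 1, by simp⟩
  | σp_mul a x ih =>
    obtain ⟨k, c, hc⟩ := ih
    obtain ⟨d, -, hd⟩ := exists_σp_mul_eq_garsideDelta_sq a
    refine ⟨k + 1, c * d, ?_⟩
    calc c * d * (σp a * x) = c * garsideDelta n ^ 2 * x := by
          rw [← hd]; simp only [mul_assoc]
      _ = (garsideDelta n ^ 2) ^ (k + 1) := by
          rw [← (commute_garsideDelta_sq c).eq, mul_assoc, hc, ← pow_succ']

theorem exists_prime_decomposition (hn : 2 ≤ n) (a : BraidMonoid n) :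
    ∃ (k : ℕ) (b : BraidMonoid n), PrimeToDelta b ∧ a = garsideDelta n ^ k * b := by
  induction h : length a using Nat.strong_induction_on generalizing a with
  | _ N IH =>
  by_cases hp : PrimeToDelta a
  · exact ⟨0, a, hp, by rw [pow_zero, one_mul]⟩
  obtain ⟨U, V, rfl⟩ := not_not.1 hp
  obtain ⟨U', hU', hl⟩ := exists_mul_garsideDelta_eq U
  have hlt : length (U' * V) < N := by
    have := length_garsideDelta_pos hn
    rw [← h, length_mul, length_mul, length_mul, hl]
    omega
  obtain ⟨k, b, hb, hUV⟩ := IH _ hlt (U' * V) rfl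
  exact ⟨k + 1, b, hb, by rw [hU', mul_assoc, hUV, pow_succ', mul_assoc]⟩

theorem exists_mul_eq_mul (r s : BraidMonoid n) : ∃ r' s', s' * r = r' * s := by
  obtain ⟨k, c, hc⟩ := exists_mul_eq_garsideDelta_sq_pow s
  exact ⟨r * c, (garsideDelta n ^ 2) ^ k,
    by rw [((commute_garsideDelta_sq r).pow_left k).eq, mul_assoc, hc]⟩

noncomputable instance : OreLocalization.OreSet (⊤ : Submonoid (BraidMonoid n)) where
  ore_right_cancel r₁ r₂ s h := by
    obtain ⟨k, c, hc⟩ := dvd_garsideDelta_sq_pow (s : BraidMonoid n)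
    refine ⟨⟨_, Submonoid.mem_top ((garsideDelta n ^ 2) ^ k)⟩, ?_⟩
    change (garsideDelta n ^ 2) ^ k * r₁ = (garsideDelta n ^ 2) ^ k * r₂
    rw [((commute_garsideDelta_sq r₁).pow_left k).eq, ((commute_garsideDelta_sq r₂).pow_left k).eq,
      hc, ← mul_assoc, ← mul_assoc, h]
  oreNum r s := (exists_mul_eq_mul r s).choose
  oreDenom r s := ⟨(exists_mul_eq_mul r s).choose_spec.choose, trivial⟩
  ore_eq r s := (exists_mul_eq_mul r s).choose_spec.choose_spec

abbrev Fractions (n : ℕ) := OreLocalization (⊤ : Submonoid (BraidMonoid n)) (BraidMonoid n)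

theorem numeratorHom_injective :
    Function.Injective (OreLocalization.numeratorHom : BraidMonoid n →* Fractions n) := by
  intro r₁ r₂ h
  obtain ⟨u, v, h₁, h₂⟩ := OreLocalization.oreDiv_eq_iff.1 h
  simp only [OneMemClass.coe_one, mul_one] at h₂
  rw [Submonoid.smul_def, smul_eq_mul, h₂] at h₁
  exact (mul_left_cancel h₁).symm

noncomputable def toUnits : BraidMonoid n →* (Fractions n)ˣ :=
  Units.liftRight OreLocalization.numeratorHom
    (fun x => OreLocalization.numeratorUnit ⟨x, trivial⟩) fun _ => rfl

end BraidMonoid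

namespace BraidGroup

variable {n : ℕ}

theorem commute_σ {i j : Fin (n - 1)} (h : (i : ℕ) + 1 < j) : Commute (σ i) (σ j) := by
  have h₁ := PresentedGroup.one_of_mem (rels := braidRels (n - 1)) (.inl ⟨i, j, h, rfl⟩)
  simp only [map_mul, map_inv] at h₁
  exact commutatorElement_eq_one_iff_commute.1 h₁

theorem σ_braid {i j : Fin (n - 1)} (h : (i : ℕ) + 1 = j) :
    σ i * σ j * σ i = σ j * σ i * σ j := by
  have h₁ := PresentedGroup.one_of_mem (rels := braidRels (n - 1)) (.inr ⟨i, j, h, rfl⟩)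
  simp only [map_mul] at h₁
  exact mul_inv_eq_one.1 h₁

def ofBraidMonoid : BraidMonoid n →* BraidGroup n :=
  PresentedMonoid.lift σ <| by
    rintro _ _ (⟨i, j, h, rfl, rfl⟩ | ⟨i, j, h, rfl, rfl⟩) <;>
      simp only [map_mul, FreeMonoid.lift_eval_of]
    exacts [commute_σ h, σ_braid h]

theorem ofBraidMonoid_σp (i : Fin (n - 1)) : ofBraidMonoid (σp i) = σ i := rfl

def lift {G : Type*} [Group G] (f : BraidMonoid n →* G) : BraidGroup n →* G :=
  PresentedGroup.toGroup (f := fun i => f (σp i)) <| by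
    rintro _ (⟨i, j, h, rfl⟩ | ⟨i, j, h, rfl⟩) <;>
      simp only [map_mul, map_inv, FreeGroup.lift_apply_of]
    · exact commutatorElement_eq_one_iff_commute.2 ((BraidMonoid.commute_σp (.inl h)).map f)
    · exact mul_inv_eq_one.2 (by simp only [← map_mul, BraidMonoid.σp_braid (.inl h)])

theorem lift_σ {G : Type*} [Group G] (f : BraidMonoid n →* G) (i : Fin (n - 1)) :
    lift f (σ i) = f (σp i) :=
  PresentedGroup.toGroup.of _

theorem lift_ofBraidMonoid {G : Type*} [Group G] (f : BraidMonoid n →* G) (x : BraidMonoid n) :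
    lift f (ofBraidMonoid x) = f x :=
  DFunLike.congr_fun (show (lift f).comp ofBraidMonoid = f from
    PresentedMonoid.ext _ (lift_σ f)) x

theorem ofBraidMonoid_injective : Function.Injective (ofBraidMonoid (n := n)) := by
  intro x y h
  have := congrArg (fun g => (lift BraidMonoid.toUnits g : BraidMonoid.Fractions n)) h
  simp only [lift_ofBraidMonoid] at this
  exact BraidMonoid.numeratorHom_injective this

theorem exists_garsideDelta_sq_pow_mul_eq (w : BraidGroup n) :
    ∃ (k : ℕ) (a : BraidMonoid n),
      ofBraidMonoid (garsideDelta n ^ 2) ^ k * w = ofBraidMonoid a := by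
  induction w using PresentedGroup.induction_on with
  | H z =>
  induction z using FreeGroup.induction_on with
  | C1 => exact ⟨0, 1, by simp⟩
  | of i => exact ⟨0, σp i, by rw [pow_zero, one_mul]; rfl⟩
  | inv_of i _ =>
    obtain ⟨c, -, hc⟩ := BraidMonoid.exists_σp_mul_eq_garsideDelta_sq i
    refine ⟨1, c, ?_⟩
    rw [pow_one, ← hc, map_mul, map_inv, ofBraidMonoid_σp]
    exact mul_inv_cancel_right _ _
  | mul u v hu hv =>
    obtain ⟨k, a, ha⟩ := hu
    obtain ⟨l, b, hb⟩ := hv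
    have hcomm : Commute (ofBraidMonoid (garsideDelta n ^ 2) ^ l) (ofBraidMonoid a) := by
      rw [← map_pow]
      exact ((BraidMonoid.commute_garsideDelta_sq a).pow_left l).map _
    refine ⟨k + l, a * b, ?_⟩
    calc ofBraidMonoid (garsideDelta n ^ 2) ^ (k + l) * PresentedGroup.mk _ (u * v)
        = ofBraidMonoid (garsideDelta n ^ 2) ^ l *
            (ofBraidMonoid (garsideDelta n ^ 2) ^ k * PresentedGroup.mk _ u) *
            PresentedGroup.mk _ v := by
          rw [map_mul, add_comm, pow_add]; simp only [mul_assoc]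
      _ = ofBraidMonoid (a * b) := by
          rw [ha, hcomm.eq, mul_assoc, hb, map_mul]

theorem exists_normalForm (hn : 2 ≤ n) (w : BraidGroup n) :
    ∃ (z : ℤ) (b : BraidMonoid n),
      PrimeToDelta b ∧ w = ofBraidMonoid (garsideDelta n) ^ z * ofBraidMonoid b := by
  obtain ⟨k, a, ha⟩ := exists_garsideDelta_sq_pow_mul_eq w
  obtain ⟨j, b, hb, rfl⟩ := BraidMonoid.exists_prime_decomposition hn a
  refine ⟨j - 2 * k, b, hb, ?_⟩
  rw [eq_inv_mul_of_mul_eq ha, map_mul, map_pow, map_pow, ← mul_assoc, ← pow_mul,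
    ← zpow_natCast, ← zpow_natCast, ← zpow_neg, ← zpow_add]
  push_cast
  ring_nf

theorem normalForm_unique_of_le {z₁ z₂ : ℤ} {b₁ b₂ : BraidMonoid n} (hz : z₂ ≤ z₁)
    (hb₂ : PrimeToDelta b₂)
    (h : ofBraidMonoid (garsideDelta n) ^ z₁ * ofBraidMonoid b₁ =
      ofBraidMonoid (garsideDelta n) ^ z₂ * ofBraidMonoid b₂) :
    z₁ = z₂ ∧ b₁ = b₂ := by
  obtain ⟨k, rfl⟩ := Int.le.dest hz
  rw [zpow_add, mul_assoc, mul_right_inj, zpow_natCast, ← map_pow, ← map_mul] at h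
  replace h := ofBraidMonoid_injective h
  cases k with
  | zero => simpa using h
  | succ k =>
    exact (hb₂ ⟨1, garsideDelta n ^ k * b₁, by rw [← h, pow_succ', one_mul, mul_assoc]⟩).elim

theorem normalForm_unique {z₁ z₂ : ℤ} {b₁ b₂ : BraidMonoid n} (hb₁ : PrimeToDelta b₁)
    (hb₂ : PrimeToDelta b₂)
    (h : ofBraidMonoid (garsideDelta n) ^ z₁ * ofBraidMonoid b₁ =
      ofBraidMonoid (garsideDelta n) ^ z₂ * ofBraidMonoid b₂) :
    z₁ = z₂ ∧ b₁ = b₂ := by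
  rcases le_total z₂ z₁ with hz | hz
  · exact normalForm_unique_of_le hz hb₂ h
  · obtain ⟨h₁, h₂⟩ := normalForm_unique_of_le hz hb₁ h.symm
    exact ⟨h₁.symm, h₂.symm⟩

end BraidGroup

/-- **Garside normal form.** Let `ι : Br_n⁺ → Br_n` be the canonical homomorphism and `Δ`
Garside's fundamental word.  Every element `w` of the braid group `Br_n` can be written
as `w = ι(Δ)^m · ι(A)` for a unique integer `m` and a unique positive braid `A` prime
to `Δ`. -/
theorem garside_normal_form (n : ℕ) (hn : 2 ≤ n) :
    ∃ ι : BraidMonoid n →* BraidGroup n,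
      (∀ i : Fin (n - 1), ι (σp i) = σ i) ∧
      ∀ w : BraidGroup n,
        ∃! p : ℤ × BraidMonoid n,
          PrimeToDelta p.2 ∧ w = ι (garsideDelta n) ^ p.1 * ι p.2 := by
  refine ⟨BraidGroup.ofBraidMonoid, BraidGroup.ofBraidMonoid_σp, fun w => ?_⟩
  obtain ⟨z, b, hb, hw⟩ := BraidGroup.exists_normalForm hn w
  refine ⟨(z, b), ⟨hb, hw⟩, ?_⟩
  rintro ⟨z', b'⟩ ⟨hb', hw'⟩
  obtain ⟨rfl, rfl⟩ := BraidGroup.normalForm_unique hb' hb (hw'.symm.trans hw)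
  rfl
end
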